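/- arXiv:1910.11120 — 9 statements merged into one kernel-verified Lean document; each statement's English description precedes it below -/
import Mathlib

section
/- Let x and C be symmetric n×n complex matrices. Then tr(C·(Y·x + x·Yᵀ)) = 0 for every n×n complex matrix Y if and only if x·C = 0. (This identifies the conormal space at x to the GL(n,ℂ)-orbit {g·x·gᵀ} inside the space of symmetric matrices, under the trace pairing.) -/
open Matrix

namespace Matrix

variable {n R : Type*} [Fintype n] [CommRing R]

theorem trace_mul_add_mul_transpose_of_isSymm {x C : Matrix n n R} (hx : x.IsSymm)
    (hC : C.IsSymm) (Y : Matrix n n R) :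
    (C * (Y * x + x * Yᵀ)).trace = 2 * (x * C * Y).trace := by
  have hYx : (C * (Y * x)).trace = (x * C * Y).trace := by
    rw [← mul_assoc, trace_mul_cycle]
  have hxYt : (C * (x * Yᵀ)).trace = (x * C * Y).trace := by
    rw [← trace_transpose, transpose_mul, transpose_mul, transpose_transpose, hx.eq, hC.eq,
      mul_assoc, trace_mul_comm]
  rw [mul_add, trace_add, hYx, hxYt, two_mul]

end Matrix

/-- For symmetric n×n complex matrices `x` and `C`, one has
`tr(C·(Y·x + x·Yᵀ)) = 0` for every n×n complex matrix `Y` iff `x·C = 0`. -/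
theorem conormal_symmetric_orbit (n : ℕ) (x C : Matrix (Fin n) (Fin n) ℂ)
    (hx : xᵀ = x) (hC : Cᵀ = C) :
    (∀ Y : Matrix (Fin n) (Fin n) ℂ, (C * (Y * x + x * Yᵀ)).trace = 0) ↔ x * C = 0 := by
  simp_rw [trace_mul_add_mul_transpose_of_isSymm hx hC, mul_eq_zero, two_ne_zero, false_or]
  rw [ext_iff_trace_mul_right (B := 0)]
  simp only [zero_mul, trace_zero]
end

section
/- Let U and U' be subspaces of ℂⁿ = E₁ ⊕ E₂ with dim U = dim U' = k. Then there exist linear automorphisms g of E₁ and h of E₂ with (g ⊕ h)(U) = U' if and only if dim(U ∩ E₁) = dim(U' ∩ E₁) and dim(U ∩ E₂) = dim(U' ∩ E₂). (This classifies the GL(p)×GL(q)-orbits Q(s,t) on the Grassmannian Gr(k,n).) -/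
/-!
Split `U = (U ⊓ E₁) ⊕ (U ⊓ E₂) ⊕ W`. The projection `π₁` onto `E₁` along `E₂` is injective on
`(U ⊓ E₁) ⊕ W`, and `π₂` likewise on `(U ⊓ E₂) ⊕ W`, so a basis `(a, b, w)` of `U` adapted to the
splitting yields independent families `π₁ (a, w)` in `E₁` and `π₂ (b, w)` in `E₂`. When `U'` has the
same three dimensions, its adapted basis has the same index sets, and automorphisms `g`, `h` of
`E₁`, `E₂` matching these families make `g ⊕ h` carry the adapted basis of `U` to that of `U'`.
Conversely `g ⊕ h` is an automorphism of the whole space fixing `E₁` and `E₂`, so it preserves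
`dim (U ⊓ Eᵢ)`.
-/

open Module Submodule LinearMap Set

section Extension

variable {K V : Type*} [DivisionRing K] [AddCommGroup V] [Module K V] [FiniteDimensional K V]

theorem Submodule.exists_linearEquiv_extend {S S' : Submodule K V} (e : S ≃ₗ[K] S') :
    ∃ F : V ≃ₗ[K] V, ∀ x : S, F x = e x := by
  obtain ⟨C, hC⟩ := S.exists_isCompl
  obtain ⟨C', hC'⟩ := S'.exists_isCompl
  have hdim : finrank K C = finrank K C' := by
    have := finrank_add_eq_of_isCompl hC
    have := finrank_add_eq_of_isCompl hC'
    have := e.finrank_eq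
    omega
  refine ⟨(S.prodEquivOfIsCompl C hC).symm ≪≫ₗ e.prodCongr (LinearEquiv.ofFinrankEq C C' hdim) ≪≫ₗ
    S'.prodEquivOfIsCompl C' hC', fun x => ?_⟩
  simp [LinearEquiv.prodCongr_apply]

theorem LinearIndependent.exists_linearEquiv_apply_eq {ι : Type*} {v v' : ι → V}
    (hv : LinearIndependent K v) (hv' : LinearIndependent K v') :
    ∃ F : V ≃ₗ[K] V, ∀ i, F (v i) = v' i := by
  obtain ⟨F, hF⟩ :=
    exists_linearEquiv_extend ((Basis.span hv).equiv (Basis.span hv') (Equiv.refl ι))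
  refine ⟨F, fun i => ?_⟩
  rw [← Basis.coe_span_apply hv, hF, Basis.equiv_apply, Equiv.refl_apply, Basis.coe_span_apply]

end Extension

theorem disjoint_sup_of_disjoint_inf_of_le {α : Type*} [Lattice α] [OrderBot α]
    [IsModularLattice α] {a b c u : α} (hac : Disjoint a (u ⊓ c)) (hb : Disjoint (a ⊔ u ⊓ c) b)
    (hu : a ⊔ b ≤ u) : Disjoint (a ⊔ b) c := by
  have h := (hac.symm.disjoint_sup_right_of_disjoint_sup_left (by rwa [sup_comm])).symm
  rw [disjoint_iff, ← inf_eq_left.2 hu, inf_assoc]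
  exact h.eq_bot

section Submodules

variable {K V : Type*} [DivisionRing K] [AddCommGroup V] [Module K V] {ι κ : Type*}
  {X Y : Submodule K V}

theorem Submodule.finrank_map_inf_eq {f : V →ₗ[K] V} (hf : Function.Injective f)
    {E : Submodule K V} (hE : map f E = E) (U : Submodule K V) :
    finrank K ↥(map f U ⊓ E) = finrank K ↥(U ⊓ E) := by
  conv_lhs => rw [← hE, ← map_inf f hf]
  exact (equivMapOfInjective f hf _).symm.finrank_eq

theorem Module.Basis.span_range_subtype_comp (bX : Basis ι K X) :
    span K (range (X.subtype ∘ bX)) = X := by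
  rw [range_comp, span_image, bX.span_eq, Submodule.map_top, range_subtype]

theorem Module.Basis.linearIndependent_sum_elim_subtype (bX : Basis ι K X) (bY : Basis κ K Y)
    (hXY : Disjoint X Y) : LinearIndependent K (Sum.elim (X.subtype ∘ bX) (Y.subtype ∘ bY)) :=
  (bX.linearIndependent.map' _ (ker_subtype X)).sum_type
    (bY.linearIndependent.map' _ (ker_subtype Y))
    (by rwa [bX.span_range_subtype_comp, bY.span_range_subtype_comp])

end Submodules

section Complement

variable {K V : Type*} [DivisionRing K] [AddCommGroup V] [Module K V]
  {E₁ E₂ : Submodule K V} (hcompl : IsCompl E₁ E₂)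

theorem LinearMap.ofIsCompl_subtype_comp_eq_add (g : E₁ →ₗ[K] E₁) (h : E₂ →ₗ[K] E₂) :
    ofIsCompl hcompl (E₁.subtype ∘ₗ g) (E₂.subtype ∘ₗ h) =
      E₁.subtype ∘ₗ g ∘ₗ E₁.projectionOnto E₂ hcompl +
        E₂.subtype ∘ₗ h ∘ₗ E₂.projectionOnto E₁ hcompl.symm :=
  ofIsCompl_eq_add hcompl

theorem LinearMap.ofIsCompl_comp_subtype_left (g : E₁ →ₗ[K] E₁) (h : E₂ →ₗ[K] E₂) :
    ofIsCompl hcompl (E₁.subtype ∘ₗ g) (E₂.subtype ∘ₗ h) ∘ₗ E₁.subtype = E₁.subtype ∘ₗ g := by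
  ext; simp

theorem LinearMap.map_ofIsCompl_left (g : E₁ ≃ₗ[K] E₁) (h : E₂ →ₗ[K] E₂) :
    map (ofIsCompl hcompl (E₁.subtype ∘ₗ g) (E₂.subtype ∘ₗ h)) E₁ = E₁ := by
  calc map _ E₁ = range (ofIsCompl hcompl (E₁.subtype ∘ₗ g) (E₂.subtype ∘ₗ h) ∘ₗ E₁.subtype) := by
        rw [range_comp, range_subtype]
    _ = E₁ := by
        rw [ofIsCompl_comp_subtype_left, range_comp, LinearEquiv.range, Submodule.map_top,
          range_subtype]

theorem LinearMap.map_ofIsCompl_right (g : E₁ →ₗ[K] E₁) (h : E₂ ≃ₗ[K] E₂) :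
    map (ofIsCompl hcompl (E₁.subtype ∘ₗ g) (E₂.subtype ∘ₗ h)) E₂ = E₂ := by
  rw [← ofIsCompl_symm, map_ofIsCompl_left]

theorem LinearMap.surjective_ofIsCompl (g : E₁ ≃ₗ[K] E₁) (h : E₂ ≃ₗ[K] E₂) :
    Function.Surjective (ofIsCompl hcompl (E₁.subtype ∘ₗ g) (E₂.subtype ∘ₗ h)) := by
  rw [← range_eq_top, range_ofIsCompl, range_comp, range_comp, LinearEquiv.range,
    LinearEquiv.range, Submodule.map_top, Submodule.map_top, range_subtype, range_subtype,
    hcompl.sup_eq_top]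

theorem LinearMap.ofIsCompl_apply_eq {g : E₁ →ₗ[K] E₁} {h : E₂ →ₗ[K] E₂} {v v' : V}
    (h₁ : g (E₁.projectionOnto E₂ hcompl v) = E₁.projectionOnto E₂ hcompl v')
    (h₂ : h (E₂.projectionOnto E₁ hcompl.symm v) = E₂.projectionOnto E₁ hcompl.symm v') :
    ofIsCompl hcompl (E₁.subtype ∘ₗ g) (E₂.subtype ∘ₗ h) v = v' := by
  rw [ofIsCompl_subtype_comp_eq_add]
  simp only [add_apply, coe_comp, Function.comp_apply, h₁, h₂, subtype_apply]
  exact projection_add_projection_eq_self hcompl v'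

structure IsAdaptedFamily (U : Submodule K V) {ι₁ ι₂ κ : Type*} (a : ι₁ → V) (b : ι₂ → V)
    (w : κ → V) : Prop where
  span_eq : span K (range a ∪ range b ∪ range w) = U
  mem_left : ∀ i, a i ∈ E₁
  mem_right : ∀ j, b j ∈ E₂
  linearIndependent_left : LinearIndependent K (E₁.projectionOnto E₂ hcompl ∘ Sum.elim a w)
  linearIndependent_right :
    LinearIndependent K (E₂.projectionOnto E₁ hcompl.symm ∘ Sum.elim b w)

theorem exists_isAdaptedFamily [FiniteDimensional K V] {U : Submodule K V} {s t d : ℕ}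
    (hs : finrank K ↥(U ⊓ E₁) = s) (ht : finrank K ↥(U ⊓ E₂) = t) (hd : finrank K U = d) :
    ∃ (a : Fin s → V) (b : Fin t → V) (w : Fin (d - s - t) → V),
      IsAdaptedFamily hcompl U a b w := by
  set A := U ⊓ E₁
  set B := U ⊓ E₂
  obtain ⟨C, hC⟩ := (A ⊔ B).exists_isCompl
  set W := C ⊓ U
  have hAB : Disjoint A B := hcompl.disjoint.mono inf_le_right inf_le_right
  have hABW : Disjoint (A ⊔ B) W := hC.disjoint.mono_right inf_le_left
  have hsup : A ⊔ B ⊔ W = U := by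
    rw [← sup_inf_assoc_of_le C (sup_le inf_le_left inf_le_left), hC.sup_eq_top, top_inf_eq]
  have hW : finrank K W = d - s - t := by
    have hABW_rank := finrank_sup_add_finrank_inf_eq (A ⊔ B) W
    have hAB_rank := finrank_sup_add_finrank_inf_eq A B
    rw [hsup, hABW.eq_bot, finrank_bot] at hABW_rank
    rw [hAB.eq_bot, finrank_bot] at hAB_rank
    omega
  let bA := finBasisOfFinrankEq K A hs
  let bB := finBasisOfFinrankEq K B ht
  let bW := finBasisOfFinrankEq K W hW
  refine ⟨A.subtype ∘ bA, B.subtype ∘ bB, W.subtype ∘ bW,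
    ⟨?_, fun i => (bA i).2.2, fun j => (bB j).2.2, ?_, ?_⟩⟩
  · rw [span_union, span_union, bA.span_range_subtype_comp, bB.span_range_subtype_comp,
      bW.span_range_subtype_comp, hsup]
  · refine (bA.linearIndependent_sum_elim_subtype bW (hABW.mono_left le_sup_left)).map ?_
    rw [ker_projectionOnto, Sum.elim_range, span_union, bA.span_range_subtype_comp,
      bW.span_range_subtype_comp]
    exact disjoint_sup_of_disjoint_inf_of_le hAB hABW (sup_le inf_le_left inf_le_right)
  · refine (bB.linearIndependent_sum_elim_subtype bW (hABW.mono_left le_sup_right)).map ?_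
    rw [ker_projectionOnto, Sum.elim_range, span_union, bB.span_range_subtype_comp,
      bW.span_range_subtype_comp]
    refine disjoint_sup_of_disjoint_inf_of_le hAB.symm ?_ (sup_le inf_le_left inf_le_right)
    rwa [sup_comm]

variable {hcompl}

theorem IsAdaptedFamily.exists_map_eq [FiniteDimensional K E₁] [FiniteDimensional K E₂]
    {U U' : Submodule K V} {ι₁ ι₂ κ : Type*} {a a' : ι₁ → V} {b b' : ι₂ → V} {w w' : κ → V}
    (hU : IsAdaptedFamily hcompl U a b w) (hU' : IsAdaptedFamily hcompl U' a' b' w') :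
    ∃ (g : E₁ ≃ₗ[K] E₁) (h : E₂ ≃ₗ[K] E₂),
      map (ofIsCompl hcompl (E₁.subtype ∘ₗ g) (E₂.subtype ∘ₗ h)) U = U' := by
  obtain ⟨g, hg⟩ :=
    hU.linearIndependent_left.exists_linearEquiv_apply_eq hU'.linearIndependent_left
  obtain ⟨h, hh⟩ :=
    hU.linearIndependent_right.exists_linearEquiv_apply_eq hU'.linearIndependent_right
  refine ⟨g, h, ?_⟩
  set Φ := ofIsCompl hcompl (E₁.subtype ∘ₗ (g : E₁ →ₗ[K] E₁)) (E₂.subtype ∘ₗ (h : E₂ →ₗ[K] E₂))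
  have ha : Φ ∘ a = a' := funext fun i => ofIsCompl_apply_eq hcompl (hg (.inl i)) (by
    simp [projectionOnto_apply_of_mem_right hcompl.symm, hU.mem_left, hU'.mem_left])
  have hb : Φ ∘ b = b' := funext fun j => ofIsCompl_apply_eq hcompl (by
    simp [projectionOnto_apply_of_mem_right hcompl, hU.mem_right, hU'.mem_right]) (hh (.inl j))
  have hw : Φ ∘ w = w' := funext fun j => ofIsCompl_apply_eq hcompl (hg (.inr j)) (hh (.inr j))
  rw [← hU.span_eq, ← hU'.span_eq, Submodule.map_span, image_union, image_union, ← range_comp,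
    ← range_comp, ← range_comp, ha, hb, hw]

end Complement

theorem orbit_classification_GLp_GLq_general (k n : ℕ)
    (E₁ E₂ : Submodule ℂ (Fin n → ℂ)) (hcompl : IsCompl E₁ E₂)
    (U U' : Submodule ℂ (Fin n → ℂ))
    (hU : finrank ℂ U = k) (hU' : finrank ℂ U' = k) :
    (∃ (g : E₁ ≃ₗ[ℂ] E₁) (h : E₂ ≃ₗ[ℂ] E₂),
        Submodule.map
          (E₁.subtype ∘ₗ (g : E₁ →ₗ[ℂ] E₁) ∘ₗ E₁.linearProjOfIsCompl E₂ hcompl +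
           E₂.subtype ∘ₗ (h : E₂ →ₗ[ℂ] E₂) ∘ₗ E₂.linearProjOfIsCompl E₁ hcompl.symm) U = U') ↔
      (finrank ℂ ↥(U ⊓ E₁) = finrank ℂ ↥(U' ⊓ E₁) ∧
       finrank ℂ ↥(U ⊓ E₂) = finrank ℂ ↥(U' ⊓ E₂)) := by
  simp only [Submodule.linearProjOfIsCompl, ← ofIsCompl_subtype_comp_eq_add]
  constructor
  · rintro ⟨g, h, rfl⟩
    have hinj := injective_iff_surjective.2 (surjective_ofIsCompl hcompl g h)
    exact ⟨(finrank_map_inf_eq hinj (map_ofIsCompl_left hcompl g h) U).symm,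
      (finrank_map_inf_eq hinj (map_ofIsCompl_right hcompl g h) U).symm⟩
  · rintro ⟨hs, ht⟩
    obtain ⟨a, b, w, hUa⟩ := exists_isAdaptedFamily hcompl rfl rfl hU
    obtain ⟨a', b', w', hU'a⟩ := exists_isAdaptedFamily hcompl hs.symm ht.symm hU'
    exact hUa.exists_map_eq hU'a

/-- For subspaces `U, U'` of `ℂⁿ = E₁ ⊕ E₂` with `dim U = dim U' = k`,
there are linear automorphisms `g` of `E₁` and `h` of `E₂` with `(g ⊕ h)(U) = U'`
iff `dim (U ∩ E₁) = dim (U' ∩ E₁)` and `dim (U ∩ E₂) = dim (U' ∩ E₂)`. -/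
theorem orbit_classification_GLp_GLq (p q k n : ℕ) (hp : 0 < p) (hq : 0 < q) (hk : 0 < k)
    (hpq : p + q = n) (hkn : k ≤ n)
    (E₁ E₂ : Submodule ℂ (Fin n → ℂ)) (hcompl : IsCompl E₁ E₂)
    (hE₁ : finrank ℂ E₁ = p) (hE₂ : finrank ℂ E₂ = q)
    (U U' : Submodule ℂ (Fin n → ℂ))
    (hU : finrank ℂ U = k) (hU' : finrank ℂ U' = k) :
    (∃ (g : E₁ ≃ₗ[ℂ] E₁) (h : E₂ ≃ₗ[ℂ] E₂),
        Submodule.map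
          (E₁.subtype ∘ₗ (g : E₁ →ₗ[ℂ] E₁) ∘ₗ E₁.linearProjOfIsCompl E₂ hcompl +
           E₂.subtype ∘ₗ (h : E₂ →ₗ[ℂ] E₂) ∘ₗ E₂.linearProjOfIsCompl E₁ hcompl.symm) U = U') ↔
      (finrank ℂ ↥(U ⊓ E₁) = finrank ℂ ↥(U' ⊓ E₁) ∧
       finrank ℂ ↥(U ⊓ E₂) = finrank ℂ ↥(U' ⊓ E₂)) :=
  orbit_classification_GLp_GLq_general k n E₁ E₂ hcompl U U' hU hU'
end

section
/- Let U ⊆ ℂⁿ = E₁ ⊕ E₂ be a k-dimensional subspace and π : ℂⁿ → ℂⁿ/U the quotient map. The image of the linear map End(E₁) × End(E₂) → Hom(U, ℂⁿ/U) sending (X,Y) to the composite of (X ⊕ Y)|_U with π equals the subspace {φ ∈ Hom(U, ℂⁿ/U) : φ(U ∩ E₁) ⊆ π(E₁) and φ(U ∩ E₂) ⊆ π(E₂)}. (This computes the tangent space at U to the GL(p)×GL(q)-orbit through U.) -/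
/-!
Put `A = U ∩ E₁`, `B = U ∩ E₂`. By the two conditions, `φ` lifts on `A` to a map into `E₁` and on
`B` to one into `E₂`; since `A ∩ B = 0`, these combine and extend to a lift
`ψ = (ψ₁, ψ₂) : U → E₁ × E₂` of `φ` through the surjection `(e₁, e₂) ↦ π (e₁ + e₂)` with
`ψ₁ = 0` on `B` and `ψ₂ = 0` on `A`. As `B` is the kernel of the projection `P₁` restricted to `U`,
`ψ₁` factors as `X ∘ P₁` with `X ∈ End(E₁)`; likewise `ψ₂ = Y ∘ P₂`.
-/

open Module

namespace LinearMap

variable {K M N P S : Type*} [DivisionRing K] [AddCommGroup M] [Module K M]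
  [AddCommGroup N] [Module K N] [AddCommGroup P] [Module K P] [AddCommGroup S] [Module K S]

theorem exists_comp_eq_of_ker_le (g : M →ₗ[K] P) (h : M →ₗ[K] N) (hle : ker g ≤ ker h) :
    ∃ f : P →ₗ[K] N, f ∘ₗ g = h := by
  obtain ⟨l, hl⟩ := ((ker g).liftQ g le_rfl).exists_leftInverse_of_injective
    ((ker g).ker_liftQ_eq_bot g le_rfl le_rfl)
  refine ⟨(ker g).liftQ h hle ∘ₗ l, ext fun m => ?_⟩
  have hlg : l (g m) = Submodule.Quotient.mk m := congr($hl (Submodule.Quotient.mk m))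
  simp [hlg]

theorem exists_comp_eq_of_range_le (f : P →ₗ[K] N) (g : M →ₗ[K] N) (hle : range g ≤ range f) :
    ∃ h : M →ₗ[K] P, f ∘ₗ h = g := by
  obtain ⟨h, hh⟩ := projective_lifting_property f.rangeRestrict
    (g.codRestrict (range f) fun m => hle (mem_range_self g m)) f.surjective_rangeRestrict
  exact ⟨h, ext fun m => congr(Subtype.val ($hh m))⟩

theorem exists_diagonal_of_injective_of_surjective (j : S →ₗ[K] M) (hj : Function.Injective j)
    (π : P →ₗ[K] N) (hπ : Function.Surjective π) (ψ₀ : S →ₗ[K] P) (φ : M →ₗ[K] N)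
    (hsq : π ∘ₗ ψ₀ = φ ∘ₗ j) : ∃ ψ : M →ₗ[K] P, π ∘ₗ ψ = φ ∧ ψ ∘ₗ j = ψ₀ := by
  obtain ⟨ψ₁, hψ₁⟩ := exists_comp_eq_of_ker_le j ψ₀ (by simp [ker_eq_bot.2 hj])
  obtain ⟨σ, hσ⟩ := exists_comp_eq_of_range_le π id (by simp [range_eq_top.2 hπ])
  refine ⟨ψ₁ + σ ∘ₗ (φ - π ∘ₗ ψ₁), ?_, ?_⟩
  · rw [comp_add, ← comp_assoc, hσ, id_comp, add_sub_cancel]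
  · rw [add_comp, comp_assoc, sub_comp, comp_assoc, hψ₁, hsq, sub_self, comp_zero, add_zero]

end LinearMap

open LinearMap

variable {K V : Type*} [DivisionRing K] [AddCommGroup V] [Module K V] {E₁ E₂ : Submodule K V}

theorem Submodule.mkQ_projectionOnto_add_mem_map {U : Submodule K V} (hcompl : IsCompl E₁ E₂)
    (X : E₁ →ₗ[K] E₁) (Y : E₂ →ₗ[K] E₂) {v : V} (hv : v ∈ E₁) :
    U.mkQ ((X (E₁.projectionOnto E₂ hcompl v) : V) + (Y (E₂.projectionOnto E₁ hcompl.symm v))) ∈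
      E₁.map U.mkQ := by
  rw [projectionOnto_apply_of_mem_right hcompl.symm hv, map_zero, ZeroMemClass.coe_zero, add_zero]
  exact Submodule.mem_map_of_mem (X _).2

theorem exists_split_of_mem_map_mkQ (hcompl : IsCompl E₁ E₂) {U : Submodule K V}
    (φ : U →ₗ[K] V ⧸ U) (h₁ : ∀ u : U, (u : V) ∈ E₁ → φ u ∈ E₁.map U.mkQ)
    (h₂ : ∀ u : U, (u : V) ∈ E₂ → φ u ∈ E₂.map U.mkQ) :
    ∃ (ψ₁ : U →ₗ[K] E₁) (ψ₂ : U →ₗ[K] E₂), (∀ u, φ u = U.mkQ (ψ₁ u + ψ₂ u)) ∧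
      E₂.comap U.subtype ≤ ker ψ₁ ∧ E₁.comap U.subtype ≤ ker ψ₂ := by
  set A := E₁.comap U.subtype
  set B := E₂.comap U.subtype
  obtain ⟨α, hα⟩ := exists_comp_eq_of_range_le (U.mkQ ∘ₗ E₁.subtype) (φ ∘ₗ A.subtype) <| by
    rintro _ ⟨a, rfl⟩
    obtain ⟨e, he, hea⟩ := h₁ a a.2
    exact ⟨⟨e, he⟩, hea⟩
  obtain ⟨β, hβ⟩ := exists_comp_eq_of_range_le (U.mkQ ∘ₗ E₂.subtype) (φ ∘ₗ B.subtype) <| by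
    rintro _ ⟨b, rfl⟩
    obtain ⟨e, he, heb⟩ := h₂ b b.2
    exact ⟨⟨e, he⟩, heb⟩
  have hAB : Disjoint A B := by
    rw [disjoint_iff, ← Submodule.comap_inf, hcompl.inf_eq_bot, Submodule.comap_bot,
      Submodule.ker_subtype]
  have hj : Function.Injective (A.subtype.coprod B.subtype) := by
    rw [← ker_eq_bot, ker_coprod_of_disjoint_range _ _ (by simpa using hAB)]
    simp
  have hπ : Function.Surjective (U.mkQ ∘ₗ E₁.subtype.coprod E₂.subtype) := by
    refine (Submodule.mkQ_surjective U).comp (range_eq_top.1 ?_)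
    rw [range_coprod, Submodule.range_subtype, Submodule.range_subtype, hcompl.sup_eq_top]
  obtain ⟨ψ, hπψ, hψj⟩ :=
      exists_diagonal_of_injective_of_surjective _ hj _ hπ (α.prodMap β) φ <| by
    ext a
    · simpa using congr($hα a)
    · simpa using congr($hβ a)
  refine ⟨fst K E₁ E₂ ∘ₗ ψ, snd K E₁ E₂ ∘ₗ ψ, fun u => congr($hπψ u).symm,
    fun u hu => ?_, fun u hu => ?_⟩
  · simpa using congr(Prod.fst ($hψj (0, ⟨u, hu⟩)))
  · simpa using congr(Prod.snd ($hψj (⟨u, hu⟩, 0)))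

theorem exists_endomorphisms_of_mem_map_mkQ (hcompl : IsCompl E₁ E₂) {U : Submodule K V}
    (φ : U →ₗ[K] V ⧸ U) (h₁ : ∀ u : U, (u : V) ∈ E₁ → φ u ∈ E₁.map U.mkQ)
    (h₂ : ∀ u : U, (u : V) ∈ E₂ → φ u ∈ E₂.map U.mkQ) :
    ∃ (X : E₁ →ₗ[K] E₁) (Y : E₂ →ₗ[K] E₂), ∀ u : U, φ u =
      U.mkQ ((X (E₁.projectionOnto E₂ hcompl u) : V) + Y (E₂.projectionOnto E₁ hcompl.symm u)) := by
  obtain ⟨ψ₁, ψ₂, hφ, hψ₁, hψ₂⟩ := exists_split_of_mem_map_mkQ hcompl φ h₁ h₂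
  obtain ⟨X, hX⟩ :=
      exists_comp_eq_of_ker_le (E₁.projectionOnto E₂ hcompl ∘ₗ U.subtype) ψ₁ <| by
    rwa [ker_comp, Submodule.ker_projectionOnto]
  obtain ⟨Y, hY⟩ :=
      exists_comp_eq_of_ker_le (E₂.projectionOnto E₁ hcompl.symm ∘ₗ U.subtype) ψ₂ <| by
    rwa [ker_comp, Submodule.ker_projectionOnto]
  exact ⟨X, Y, fun u => by rw [hφ u, ← hX, ← hY]; rfl⟩

theorem tangent_space_orbit_GLp_GLq_general (n : ℕ)
    (E₁ E₂ : Submodule ℂ (Fin n → ℂ)) (hcompl : IsCompl E₁ E₂)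
    (U : Submodule ℂ (Fin n → ℂ)) :
    {φ : U →ₗ[ℂ] ((Fin n → ℂ) ⧸ U) | ∃ (X : E₁ →ₗ[ℂ] E₁) (Y : E₂ →ₗ[ℂ] E₂),
        ∀ u : U, φ u =
          U.mkQ ((X (E₁.linearProjOfIsCompl E₂ hcompl (u : Fin n → ℂ)) : Fin n → ℂ) +
                 (Y (E₂.linearProjOfIsCompl E₁ hcompl.symm (u : Fin n → ℂ)) : Fin n → ℂ))} =
    {φ : U →ₗ[ℂ] ((Fin n → ℂ) ⧸ U) |
        (∀ u : U, (u : Fin n → ℂ) ∈ E₁ → φ u ∈ Submodule.map U.mkQ E₁) ∧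
        (∀ u : U, (u : Fin n → ℂ) ∈ E₂ → φ u ∈ Submodule.map U.mkQ E₂)} := by
  ext φ
  constructor
  · rintro ⟨X, Y, hφ⟩
    refine ⟨fun u hu => ?_, fun u hu => ?_⟩
    · rw [hφ u]
      exact Submodule.mkQ_projectionOnto_add_mem_map hcompl X Y hu
    · rw [hφ u, add_comm]
      exact Submodule.mkQ_projectionOnto_add_mem_map hcompl.symm Y X hu
  · rintro ⟨h₁, h₂⟩
    exact exists_endomorphisms_of_mem_map_mkQ hcompl φ h₁ h₂

/-- For a k-dimensional subspace `U ⊆ ℂⁿ = E₁ ⊕ E₂` with quotient map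
`π : ℂⁿ → ℂⁿ/U`, the image of the map `End(E₁) × End(E₂) → Hom(U, ℂⁿ/U)`,
`(X,Y) ↦ π ∘ (X ⊕ Y)|_U`, equals
`{φ : φ(U ∩ E₁) ⊆ π(E₁) and φ(U ∩ E₂) ⊆ π(E₂)}`. -/
theorem tangent_space_orbit_GLp_GLq (p q k n : ℕ) (hp : 0 < p) (hq : 0 < q) (hk : 0 < k)
    (hpq : p + q = n) (hkn : k ≤ n)
    (E₁ E₂ : Submodule ℂ (Fin n → ℂ)) (hcompl : IsCompl E₁ E₂)
    (hE₁ : finrank ℂ E₁ = p) (hE₂ : finrank ℂ E₂ = q)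
    (U : Submodule ℂ (Fin n → ℂ)) (hU : finrank ℂ U = k) :
    {φ : U →ₗ[ℂ] ((Fin n → ℂ) ⧸ U) | ∃ (X : E₁ →ₗ[ℂ] E₁) (Y : E₂ →ₗ[ℂ] E₂),
        ∀ u : U, φ u =
          U.mkQ ((X (E₁.linearProjOfIsCompl E₂ hcompl (u : Fin n → ℂ)) : Fin n → ℂ) +
                 (Y (E₂.linearProjOfIsCompl E₁ hcompl.symm (u : Fin n → ℂ)) : Fin n → ℂ))} =
    {φ : U →ₗ[ℂ] ((Fin n → ℂ) ⧸ U) |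
        (∀ u : U, (u : Fin n → ℂ) ∈ E₁ → φ u ∈ Submodule.map U.mkQ E₁) ∧
        (∀ u : U, (u : Fin n → ℂ) ∈ E₂ → φ u ∈ Submodule.map U.mkQ E₂)} :=
  tangent_space_orbit_GLp_GLq_general n E₁ E₂ hcompl U
end

section
/- Let U ⊆ ℂⁿ = E₁ ⊕ E₂ be a k-dimensional subspace and π : ℂⁿ → ℂⁿ/U the quotient map. Under the perfect pairing Hom(U, ℂⁿ/U) × Hom(ℂⁿ/U, U) → ℂ given by (φ, ψ) ↦ tr(ψ ∘ φ), the annihilator of the subspace T = {φ : φ(U ∩ E₁) ⊆ π(E₁) and φ(U ∩ E₂) ⊆ π(E₂)} equals N = {ψ : ψ(π(E₁)) ⊆ U ∩ E₂ and ψ(π(E₂)) ⊆ U ∩ E₁}. (This computes the conormal space at U to the GL(p)×GL(q)-orbit through U.) -/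
open Module Submodule LinearMap

/-!
Write `A = U ∩ E₁` and `B = U ∩ E₂`. If `ψ ∈ N` and `φ ∈ T`, then `ψ ∘ φ` sends `A` into `B`,
`B` into `A`, and takes values in `A ⊕ B` (because `π(E₁) + π(E₂)` is the whole quotient), so it is
block off-diagonal and hence traceless. Conversely, for `x ∈ E₁` and any functional `g` on `U`
vanishing on `B`, the rank-one map `u ↦ g u • π x` lies in `T` and pairs with `ψ` to `g (ψ (π x))`;
if all these vanish, then `ψ (π x) ∈ B`. The case `x ∈ E₂` is symmetric.
-/

variable {K V : Type*} [Field K] [AddCommGroup V] [Module K V]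

theorem LinearMap.trace_eq_zero_of_range_le_ker [FiniteDimensional K V] {f : V →ₗ[K] V}
    (h : range f ≤ ker f) : trace K V f = 0 :=
  (isNilpotent_trace_of_isNilpotent
    ⟨2, by rwa [sq, Module.End.mul_eq_comp, ← range_le_ker_iff]⟩).eq_zero

theorem LinearMap.trace_eq_zero_of_map_le_swap [FiniteDimensional K V] {A B : Submodule K V}
    (hAB : Disjoint A B) {f : V →ₗ[K] V} (hA : A.map f ≤ B) (hB : B.map f ≤ A)
    (hf : range f ≤ A ⊔ B) : trace K V f = 0 := by
  -- Split `f` along a complement `C ⊇ B` of `A`: both pieces square to zero.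
  obtain ⟨C, hBC, hCA⟩ := hAB.symm.exists_isCompl
  set p := A.projection C hCA.symm
  set q := C.projection A hCA
  have hp : trace K V (p ∘ₗ f) = 0 := by
    refine trace_eq_zero_of_range_le_ker ?_
    calc range (p ∘ₗ f) ≤ A := (range_comp_le_range f p).trans (range_projection _).le
      _ ≤ ker (p ∘ₗ f) := by
        rw [ker_comp, ← map_le_iff_le_comap, ker_projection]
        exact hA.trans hBC
  have hq : trace K V (q ∘ₗ f) = 0 := by
    refine trace_eq_zero_of_range_le_ker ?_
    have hqA : A.map q = ⊥ := le_ker_iff_map.mp (ker_projection hCA).ge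
    have hqB : B.map q ≤ B := by
      rintro _ ⟨b, hb, rfl⟩
      rwa [projection_apply_of_mem_left hCA (hBC hb)]
    calc range (q ∘ₗ f) ≤ B := by
          rw [range_comp]
          refine (map_mono hf).trans ?_
          rw [Submodule.map_sup, hqA, bot_sup_eq]
          exact hqB
      _ ≤ ker (q ∘ₗ f) := by
        rw [ker_comp, ← map_le_iff_le_comap, ker_projection]
        exact hB
  rw [← id_comp f, ← projection_add_projection_eq_id hCA.symm, add_comp, map_add, hp, hq,
    add_zero]

variable {U E₁ E₂ : Submodule K V} [FiniteDimensional K U]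

theorem apply_mkQ_mem_of_trace_comp_eq_zero {ψ : V ⧸ U →ₗ[K] U}
    (h : ∀ φ : U →ₗ[K] V ⧸ U, ((∀ u : U, (u : V) ∈ E₁ → φ u ∈ E₁.map U.mkQ) ∧
        (∀ u : U, (u : V) ∈ E₂ → φ u ∈ E₂.map U.mkQ)) → trace K U (ψ ∘ₗ φ) = 0)
    {x : V} (hx : x ∈ E₁) : (ψ (U.mkQ x) : V) ∈ E₂ := by
  change ψ (U.mkQ x) ∈ E₂.comap U.subtype
  refine (Subspace.forall_mem_dualAnnihilator_apply_eq_zero_iff _ _).mp fun g hg => ?_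
  have hgE₂ : ∀ u : U, (u : V) ∈ E₂ → g u = 0 := (mem_dualAnnihilator g).mp hg
  have hcomp : ψ ∘ₗ g.smulRight (U.mkQ x) = g.smulRight (ψ (U.mkQ x)) := by
    ext u
    simp
  have htrace := h (g.smulRight (U.mkQ x))
    ⟨fun u _ => smul_mem _ _ (mem_map_of_mem hx), fun u hu => by simp [hgE₂ u hu]⟩
  rwa [hcomp, trace_smulRight] at htrace

theorem trace_comp_eq_zero_of_apply_mkQ_mem (hE : IsCompl E₁ E₂) {ψ : V ⧸ U →ₗ[K] U}
    (hψ₁ : ∀ x ∈ E₁, (ψ (U.mkQ x) : V) ∈ E₂) (hψ₂ : ∀ x ∈ E₂, (ψ (U.mkQ x) : V) ∈ E₁)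
    {φ : U →ₗ[K] V ⧸ U} (hφ₁ : ∀ u : U, (u : V) ∈ E₁ → φ u ∈ E₁.map U.mkQ)
    (hφ₂ : ∀ u : U, (u : V) ∈ E₂ → φ u ∈ E₂.map U.mkQ) :
    trace K U (ψ ∘ₗ φ) = 0 := by
  set A := E₁.comap U.subtype
  set B := E₂.comap U.subtype
  have hψ₁' : (E₁.map U.mkQ).map ψ ≤ B := by
    rintro _ ⟨_, ⟨x, hx, rfl⟩, rfl⟩
    exact hψ₁ x hx
  have hψ₂' : (E₂.map U.mkQ).map ψ ≤ A := by
    rintro _ ⟨_, ⟨x, hx, rfl⟩, rfl⟩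
    exact hψ₂ x hx
  have hsup : E₁.map U.mkQ ⊔ E₂.map U.mkQ = ⊤ := by
    rw [← Submodule.map_sup, hE.sup_eq_top, Submodule.map_top, range_mkQ]
  refine trace_eq_zero_of_map_le_swap (A := A) (B := B) ?_ ?_ ?_ ?_
  · rw [disjoint_iff, ← comap_inf, hE.inf_eq_bot, comap_bot, ker_subtype]
  · rw [map_comp]
    exact (map_mono (map_le_iff_le_comap.mpr hφ₁)).trans hψ₁'
  · rw [map_comp]
    exact (map_mono (map_le_iff_le_comap.mpr hφ₂)).trans hψ₂'
  · calc range (ψ ∘ₗ φ) ≤ range ψ := range_comp_le_range φ ψ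
      _ = (E₁.map U.mkQ).map ψ ⊔ (E₂.map U.mkQ).map ψ := by
        rw [← Submodule.map_sup, hsup, Submodule.map_top]
      _ ≤ A ⊔ B := by rw [sup_comm]; exact sup_le_sup hψ₂' hψ₁'

theorem conormal_space_orbit_GLp_GLq_general (n : ℕ)
    (E₁ E₂ : Submodule ℂ (Fin n → ℂ)) (hcompl : IsCompl E₁ E₂)
    (U : Submodule ℂ (Fin n → ℂ)) :
    {ψ : ((Fin n → ℂ) ⧸ U) →ₗ[ℂ] U | ∀ φ : U →ₗ[ℂ] ((Fin n → ℂ) ⧸ U),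
        ((∀ u : U, (u : Fin n → ℂ) ∈ E₁ → φ u ∈ Submodule.map U.mkQ E₁) ∧
         (∀ u : U, (u : Fin n → ℂ) ∈ E₂ → φ u ∈ Submodule.map U.mkQ E₂)) →
        LinearMap.trace ℂ U (ψ ∘ₗ φ) = 0} =
    {ψ : ((Fin n → ℂ) ⧸ U) →ₗ[ℂ] U |
        (∀ x ∈ E₁, (ψ (U.mkQ x) : Fin n → ℂ) ∈ E₂) ∧
        (∀ x ∈ E₂, (ψ (U.mkQ x) : Fin n → ℂ) ∈ E₁)} := by
  ext ψ
  refine ⟨fun h => ⟨fun x hx => apply_mkQ_mem_of_trace_comp_eq_zero h hx,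
    fun x hx => apply_mkQ_mem_of_trace_comp_eq_zero (fun φ hφ => h φ hφ.symm) hx⟩, ?_⟩
  rintro ⟨hψ₁, hψ₂⟩ φ ⟨hφ₁, hφ₂⟩
  exact trace_comp_eq_zero_of_apply_mkQ_mem hcompl hψ₁ hψ₂ hφ₁ hφ₂

/-- For a k-dimensional subspace `U ⊆ ℂⁿ = E₁ ⊕ E₂` with quotient map
`π : ℂⁿ → ℂⁿ/U`, under the trace pairing `(φ, ψ) ↦ tr(ψ ∘ φ)` the annihilator of
`T = {φ : U →ₗ ℂⁿ/U | φ(U ∩ E₁) ⊆ π(E₁), φ(U ∩ E₂) ⊆ π(E₂)}` equals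
`N = {ψ : ℂⁿ/U →ₗ U | ψ(π(E₁)) ⊆ U ∩ E₂, ψ(π(E₂)) ⊆ U ∩ E₁}`. -/
theorem conormal_space_orbit_GLp_GLq (p q k n : ℕ) (hp : 0 < p) (hq : 0 < q) (hk : 0 < k)
    (hpq : p + q = n) (hkn : k ≤ n)
    (E₁ E₂ : Submodule ℂ (Fin n → ℂ)) (hcompl : IsCompl E₁ E₂)
    (hE₁ : finrank ℂ E₁ = p) (hE₂ : finrank ℂ E₂ = q)
    (U : Submodule ℂ (Fin n → ℂ)) (hU : finrank ℂ U = k) :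
    {ψ : ((Fin n → ℂ) ⧸ U) →ₗ[ℂ] U | ∀ φ : U →ₗ[ℂ] ((Fin n → ℂ) ⧸ U),
        ((∀ u : U, (u : Fin n → ℂ) ∈ E₁ → φ u ∈ Submodule.map U.mkQ E₁) ∧
         (∀ u : U, (u : Fin n → ℂ) ∈ E₂ → φ u ∈ Submodule.map U.mkQ E₂)) →
        LinearMap.trace ℂ U (ψ ∘ₗ φ) = 0} =
    {ψ : ((Fin n → ℂ) ⧸ U) →ₗ[ℂ] U |
        (∀ x ∈ E₁, (ψ (U.mkQ x) : Fin n → ℂ) ∈ E₂) ∧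
        (∀ x ∈ E₂, (ψ (U.mkQ x) : Fin n → ℂ) ∈ E₁)} :=
  conormal_space_orbit_GLp_GLq_general n E₁ E₂ hcompl U
end

section
/- Let U ⊆ ℂⁿ = E₁ ⊕ E₂ be a k-dimensional subspace, π : ℂⁿ → ℂⁿ/U the quotient map, s = dim(U ∩ E₁), and t = dim(U ∩ E₂). Then every linear map ψ : ℂⁿ/U → U satisfying ψ(π(E₁)) ⊆ U ∩ E₂ and ψ(π(E₂)) ⊆ U ∩ E₁ has rank(ψ) ≤ min(s, (n−k) − dim π(E₁)) + min(t, (n−k) − dim π(E₂)), where dim π(E₁) = p − s and dim π(E₂) = q − t. -/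
open Module

set_option maxHeartbeats 1000000
set_option synthInstance.maxHeartbeats 400000

/-- With `U ⊆ ℂⁿ = E₁ ⊕ E₂` of dimension `k`, `s = dim (U ∩ E₁)`,
`t = dim (U ∩ E₂)`, every linear map `ψ : ℂⁿ/U → U` with `ψ(π(E₁)) ⊆ U ∩ E₂` and
`ψ(π(E₂)) ⊆ U ∩ E₁` satisfies
`rank ψ ≤ min s ((n−k) − (p−s)) + min t ((n−k) − (q−t))`
(here `dim π(E₁) = p − s` and `dim π(E₂) = q − t`). -/
theorem conormal_vector_rank_bound (p q k n s t : ℕ) (hp : 0 < p) (hq : 0 < q) (hk : 0 < k)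
    (hpq : p + q = n) (hkn : k ≤ n)
    (E₁ E₂ : Submodule ℂ (Fin n → ℂ)) (hcompl : IsCompl E₁ E₂)
    (hE₁ : finrank ℂ E₁ = p) (hE₂ : finrank ℂ E₂ = q)
    (U : Submodule ℂ (Fin n → ℂ)) (hU : finrank ℂ U = k)
    (hs : finrank ℂ ↥(U ⊓ E₁) = s) (ht : finrank ℂ ↥(U ⊓ E₂) = t) :
    ∀ ψ : ((Fin n → ℂ) ⧸ U) →ₗ[ℂ] U,
      (∀ x ∈ E₁, (ψ (U.mkQ x) : Fin n → ℂ) ∈ E₂) →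
      (∀ x ∈ E₂, (ψ (U.mkQ x) : Fin n → ℂ) ∈ E₁) →
      finrank ℂ (LinearMap.range ψ) ≤
        min s ((n - k) - (p - s)) + min t ((n - k) - (q - t)) := by
  intro ψ h1 h2
  set V₁ := E₁.map U.mkQ with hV₁
  set V₂ := E₂.map U.mkQ with hV₂
  have hsup : V₁ ⊔ V₂ = ⊤ := by
    rw [hV₁, hV₂, ← Submodule.map_sup, hcompl.sup_eq_top, Submodule.map_top, U.range_mkQ]
  have hψ1 : ∀ x ∈ V₁, (ψ x : Fin n → ℂ) ∈ E₂ := by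
    rintro x ⟨e, he, rfl⟩; exact h1 e he
  have hψ2 : ∀ x ∈ V₂, (ψ x : Fin n → ℂ) ∈ E₁ := by
    rintro x ⟨e, he, rfl⟩; exact h2 e he
  have hker : ∀ x ∈ V₁ ⊓ V₂, ψ x = 0 := by
    rintro x ⟨hx1, hx2⟩
    have h0 : (ψ x : Fin n → ℂ) ∈ E₁ ⊓ E₂ := ⟨hψ2 x hx2, hψ1 x hx1⟩
    rw [hcompl.inf_eq_bot, Submodule.mem_bot] at h0
    exact Subtype.ext h0
  -- dimension of quotient
  have hQ : finrank ℂ ((Fin n → ℂ) ⧸ U) + k = n := by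
    have := Submodule.finrank_quotient_add_finrank U
    rw [hU] at this
    simpa using this
  -- finrank V₁ + s = p
  have dimV₁ : finrank ℂ V₁ + s = p := by
    have h := LinearMap.finrank_range_add_finrank_ker (U.mkQ.comp E₁.subtype)
    rw [LinearMap.range_comp, Submodule.range_subtype] at h
    have hk1 : LinearMap.ker (U.mkQ.comp E₁.subtype) =
        (U ⊓ E₁).comap E₁.subtype := by
      ext x
      simp [LinearMap.mem_ker, Submodule.mem_comap, U.ker_mkQ, x.2]
    have e1 : finrank ℂ ↥((U ⊓ E₁).comap E₁.subtype) = s :=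
      ((Submodule.comapSubtypeEquivOfLe (inf_le_right : U ⊓ E₁ ≤ E₁)).finrank_eq).trans hs
    rw [hk1] at h
    rw [e1, hE₁] at h
    exact h
  have dimV₂ : finrank ℂ V₂ + t = q := by
    have h := LinearMap.finrank_range_add_finrank_ker (U.mkQ.comp E₂.subtype)
    rw [LinearMap.range_comp, Submodule.range_subtype] at h
    have hk1 : LinearMap.ker (U.mkQ.comp E₂.subtype) =
        (U ⊓ E₂).comap E₂.subtype := by
      ext x
      simp [LinearMap.mem_ker, Submodule.mem_comap, U.ker_mkQ, x.2]
    have e1 : finrank ℂ ↥((U ⊓ E₂).comap E₂.subtype) = t :=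
      ((Submodule.comapSubtypeEquivOfLe (inf_le_right : U ⊓ E₂ ≤ E₂)).finrank_eq).trans ht
    rw [hk1] at h
    rw [e1, hE₂] at h
    exact h
  -- sup/inf dimension relation
  have hsupinf : finrank ℂ ((Fin n → ℂ) ⧸ U) + finrank ℂ ↥(V₁ ⊓ V₂) =
      finrank ℂ V₁ + finrank ℂ V₂ := by
    have := Submodule.finrank_sup_add_finrank_inf_eq V₁ V₂
    rwa [hsup, finrank_top] at this
  -- images
  have him1 : finrank ℂ ↥(V₁.map ψ) + finrank ℂ ↥(V₁ ⊓ V₂) ≤ finrank ℂ V₁ := by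
    have h := LinearMap.finrank_range_add_finrank_ker (ψ.comp V₁.subtype)
    rw [LinearMap.range_comp, Submodule.range_subtype] at h
    have hle : (V₁ ⊓ V₂).comap V₁.subtype ≤ LinearMap.ker (ψ.comp V₁.subtype) := by
      intro x hx
      simp only [Submodule.mem_comap] at hx
      simpa [LinearMap.mem_ker] using hker _ hx
    have h2' := Submodule.finrank_mono hle
    have e1 : finrank ℂ ↥((V₁ ⊓ V₂).comap V₁.subtype) = finrank ℂ ↥(V₁ ⊓ V₂) :=
      (Submodule.comapSubtypeEquivOfLe (inf_le_left : V₁ ⊓ V₂ ≤ V₁)).finrank_eq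
    omega
  have him2 : finrank ℂ ↥(V₂.map ψ) + finrank ℂ ↥(V₁ ⊓ V₂) ≤ finrank ℂ V₂ := by
    have h := LinearMap.finrank_range_add_finrank_ker (ψ.comp V₂.subtype)
    rw [LinearMap.range_comp, Submodule.range_subtype] at h
    have hle : (V₁ ⊓ V₂).comap V₂.subtype ≤ LinearMap.ker (ψ.comp V₂.subtype) := by
      intro x hx
      simp only [Submodule.mem_comap] at hx
      simpa [LinearMap.mem_ker] using hker _ hx
    have h2' := Submodule.finrank_mono hle
    have e1 : finrank ℂ ↥((V₁ ⊓ V₂).comap V₂.subtype) = finrank ℂ ↥(V₁ ⊓ V₂) :=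
      (Submodule.comapSubtypeEquivOfLe (inf_le_right : V₁ ⊓ V₂ ≤ V₂)).finrank_eq
    omega
  -- images land in U ⊓ E₂ and U ⊓ E₁
  have hb1 : finrank ℂ ↥(V₁.map ψ) ≤ t := by
    have hle : V₁.map ψ ≤ (U ⊓ E₂).comap U.subtype := by
      rintro y ⟨x, hx, rfl⟩
      exact ⟨(ψ x).2, hψ1 x hx⟩
    have h2' := Submodule.finrank_mono hle
    have e1 : finrank ℂ ↥((U ⊓ E₂).comap U.subtype) = t :=
      ((Submodule.comapSubtypeEquivOfLe (inf_le_left : U ⊓ E₂ ≤ U)).finrank_eq).trans ht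
    omega
  have hb2 : finrank ℂ ↥(V₂.map ψ) ≤ s := by
    have hle : V₂.map ψ ≤ (U ⊓ E₁).comap U.subtype := by
      rintro y ⟨x, hx, rfl⟩
      exact ⟨(ψ x).2, hψ2 x hx⟩
    have h2' := Submodule.finrank_mono hle
    have e1 : finrank ℂ ↥((U ⊓ E₁).comap U.subtype) = s :=
      ((Submodule.comapSubtypeEquivOfLe (inf_le_left : U ⊓ E₁ ≤ U)).finrank_eq).trans hs
    omega
  -- the range is the sup of the two images
  have hrange : LinearMap.range ψ = V₁.map ψ ⊔ V₂.map ψ := by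
    rw [← Submodule.map_sup, hsup, ← LinearMap.range_eq_map]
  have hfin : finrank ℂ (LinearMap.range ψ) ≤
      finrank ℂ ↥(V₁.map ψ) + finrank ℂ ↥(V₂.map ψ) := by
    rw [hrange]
    have := Submodule.finrank_sup_add_finrank_inf_eq (V₁.map ψ) (V₂.map ψ)
    omega
  omega
end

section
/- Let U ⊆ ℂⁿ = E₁ ⊕ E₂ be a k-dimensional subspace, π : ℂⁿ → ℂⁿ/U the quotient map, s = dim(U ∩ E₁), and t = dim(U ∩ E₂). Then there exists a linear map ψ : ℂⁿ/U → U with ψ(π(E₁)) ⊆ U ∩ E₂ and ψ(π(E₂)) ⊆ U ∩ E₁ such that rank(ψ) = min(s, (n−k) − dim π(E₁)) + min(t, (n−k) − dim π(E₂)), where dim π(E₁) = p − s and dim π(E₂) = q − t. (Thus a generic conormal vector to the orbit Q(s,t) at U attains this rank.) -/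
/-! Take `ψ = f₁ + f₂`, where `f₁` kills `π(E₂)` and takes values in `U ∩ E₂`, and `f₂` kills
`π(E₁)` and takes values in `U ∩ E₁`, each of the largest rank its kernel condition allows,
`min (dim (ℂⁿ/U) - dim π(Eᵢ)) (dim (U ∩ Eⱼ))`. Since `π(E₁) + π(E₂) = ℂⁿ/U` the kernels of `f₁` and
`f₂` span, and since `E₁ ∩ E₂ = 0` their images are independent, so the ranks add. -/

open Module LinearMap

section
variable {K V W : Type*} [Field K] [AddCommGroup V] [Module K V] [AddCommGroup W] [Module K W]

theorem exists_linearMap_finrank_range_eq_min [FiniteDimensional K V] [FiniteDimensional K W] :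
    ∃ f : V →ₗ[K] W, finrank K (range f) = min (finrank K V) (finrank K W) := by
  set m := min (finrank K V) (finrank K W)
  obtain ⟨j, hj⟩ := finrank_le_iff_exists_linearMap.mp
    (show finrank K (Fin m → K) ≤ finrank K V by simp [m])
  obtain ⟨ι, hι⟩ := finrank_le_iff_exists_linearMap.mp
    (show finrank K (Fin m → K) ≤ finrank K W by simp [m])
  obtain ⟨r, hr⟩ := j.exists_leftInverse_of_injective (ker_eq_bot.mpr hj)
  have hr_surj : range r = ⊤ := range_eq_top.mpr fun x => ⟨j x, congr($hr x)⟩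
  refine ⟨ι ∘ₗ r, ?_⟩
  rw [range_comp_of_range_eq_top ι hr_surj, finrank_range_of_inj hι, finrank_fin_fun]

theorem exists_linearMap_le_ker_range_le [FiniteDimensional K V] (S : Submodule K V)
    (T : Submodule K W) [FiniteDimensional K T] :
    ∃ f : V →ₗ[K] W, S ≤ ker f ∧ range f ≤ T ∧
      finrank K (range f) = min (finrank K V - finrank K S) (finrank K T) := by
  obtain ⟨h, hh⟩ := exists_linearMap_finrank_range_eq_min (K := K) (V := V ⧸ S) (W := T)
  refine ⟨T.subtype ∘ₗ h ∘ₗ S.mkQ, fun x hx => ?_, ?_, ?_⟩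
  · simp [(Submodule.Quotient.mk_eq_zero S).mpr hx]
  · rw [range_comp]; exact Submodule.map_subtype_le T _
  · rw [range_comp, range_comp_of_range_eq_top h S.range_mkQ, Submodule.finrank_map_subtype_eq,
      hh, S.finrank_quotient]

theorem finrank_range_add_eq_of_disjoint [FiniteDimensional K W] {f g : V →ₗ[K] W}
    (hrange : Disjoint (range f) (range g)) (hker : ker f ⊔ ker g = ⊤) :
    finrank K (range (f + g)) = finrank K (range f) + finrank K (range g) := by
  have hsup : range (f + g) = range f ⊔ range g := by
    refine le_antisymm (range_add_le f g) (sup_le ?_ ?_)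
    all_goals
      rintro _ ⟨v, rfl⟩
      obtain ⟨a, ha, b, hb, rfl⟩ := Submodule.mem_sup.mp (hker ▸ Submodule.mem_top (x := v))
      rw [mem_ker] at ha hb
    · exact ⟨b, by simp [ha, hb]⟩
    · exact ⟨a, by simp [ha, hb]⟩
  rw [hsup, ← Submodule.finrank_sup_add_finrank_inf_eq, hrange.eq_bot, finrank_bot, add_zero]

end

namespace Submodule
variable {K V : Type*} [Field K] [AddCommGroup V] [Module K V]

theorem finrank_comap_subtype (U F : Submodule K V) :
    finrank K (F.comap U.subtype) = finrank K ↥(U ⊓ F) := by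
  rw [← finrank_map_subtype_eq, map_comap_subtype]

theorem finrank_map_mkQ_add_finrank_inf (U E : Submodule K V) [FiniteDimensional K E] :
    finrank K (E.map U.mkQ) + finrank K ↥(U ⊓ E) = finrank K E := by
  have hker : ker (U.mkQ ∘ₗ E.subtype) = U.comap E.subtype := by
    rw [ker_comp, ker_mkQ]
  rw [← (U.mkQ ∘ₗ E.subtype).finrank_range_add_finrank_ker, range_comp, range_subtype, hker,
    finrank_comap_subtype, inf_comm]

end Submodule

theorem conormal_vector_rank_attained_general (p q k n s t : ℕ)
    (E₁ E₂ : Submodule ℂ (Fin n → ℂ)) (hcompl : IsCompl E₁ E₂)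
    (hE₁ : finrank ℂ E₁ = p) (hE₂ : finrank ℂ E₂ = q)
    (U : Submodule ℂ (Fin n → ℂ)) (hU : finrank ℂ U = k)
    (hs : finrank ℂ ↥(U ⊓ E₁) = s) (ht : finrank ℂ ↥(U ⊓ E₂) = t) :
    ∃ ψ : ((Fin n → ℂ) ⧸ U) →ₗ[ℂ] U,
      (∀ x ∈ E₁, (ψ (U.mkQ x) : Fin n → ℂ) ∈ E₂) ∧
      (∀ x ∈ E₂, (ψ (U.mkQ x) : Fin n → ℂ) ∈ E₁) ∧
      finrank ℂ (LinearMap.range ψ) =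
        min s ((n - k) - (p - s)) + min t ((n - k) - (q - t)) := by
  obtain ⟨f₁, hf₁ker, hf₁range, hf₁rank⟩ :=
    exists_linearMap_le_ker_range_le (E₂.map U.mkQ) (E₂.comap U.subtype)
  obtain ⟨f₂, hf₂ker, hf₂range, hf₂rank⟩ :=
    exists_linearMap_le_ker_range_le (E₁.map U.mkQ) (E₁.comap U.subtype)
  have hf₁_E₂ : ∀ x ∈ E₂, f₁ (U.mkQ x) = 0 := fun x hx => hf₁ker (Submodule.mem_map_of_mem hx)
  have hf₂_E₁ : ∀ x ∈ E₁, f₂ (U.mkQ x) = 0 := fun x hx => hf₂ker (Submodule.mem_map_of_mem hx)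
  refine ⟨f₁ + f₂, fun x hx => ?_, fun x hx => ?_, ?_⟩
  · rw [LinearMap.add_apply, hf₂_E₁ x hx, add_zero]
    exact hf₁range (mem_range_self f₁ _)
  · rw [LinearMap.add_apply, hf₁_E₂ x hx, zero_add]
    exact hf₂range (mem_range_self f₂ _)
  have hdisj : Disjoint (E₂.comap U.subtype) (E₁.comap U.subtype) := by
    rw [disjoint_iff, ← Submodule.comap_inf, hcompl.symm.inf_eq_bot, Submodule.comap_bot,
      Submodule.ker_subtype]
  have hker : ker f₁ ⊔ ker f₂ = ⊤ := by
    rw [eq_top_iff, ← U.range_mkQ, ← Submodule.map_top, ← hcompl.sup_eq_top,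
      Submodule.map_sup, sup_comm]
    exact sup_le_sup hf₁ker hf₂ker
  have hQ : finrank ℂ ((Fin n → ℂ) ⧸ U) = n - k := by
    rw [U.finrank_quotient, finrank_fin_fun, hU]
  have hP₁ := U.finrank_map_mkQ_add_finrank_inf E₁
  have hP₂ := U.finrank_map_mkQ_add_finrank_inf E₂
  rw [finrank_range_add_eq_of_disjoint (hdisj.mono hf₁range hf₂range) hker, hf₁rank, hf₂rank,
    Submodule.finrank_comap_subtype, Submodule.finrank_comap_subtype, hQ]
  omega

/-- With `U ⊆ ℂⁿ = E₁ ⊕ E₂` of dimension `k`, `s = dim (U ∩ E₁)`,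
`t = dim (U ∩ E₂)`, there exists a linear map `ψ : ℂⁿ/U → U` with
`ψ(π(E₁)) ⊆ U ∩ E₂` and `ψ(π(E₂)) ⊆ U ∩ E₁` such that
`rank ψ = min s ((n−k) − (p−s)) + min t ((n−k) − (q−t))`
(here `dim π(E₁) = p − s` and `dim π(E₂) = q − t`). -/
theorem conormal_vector_rank_attained (p q k n s t : ℕ) (hp : 0 < p) (hq : 0 < q) (hk : 0 < k)
    (hpq : p + q = n) (hkn : k ≤ n)
    (E₁ E₂ : Submodule ℂ (Fin n → ℂ)) (hcompl : IsCompl E₁ E₂)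
    (hE₁ : finrank ℂ E₁ = p) (hE₂ : finrank ℂ E₂ = q)
    (U : Submodule ℂ (Fin n → ℂ)) (hU : finrank ℂ U = k)
    (hs : finrank ℂ ↥(U ⊓ E₁) = s) (ht : finrank ℂ ↥(U ⊓ E₂) = t) :
    ∃ ψ : ((Fin n → ℂ) ⧸ U) →ₗ[ℂ] U,
      (∀ x ∈ E₁, (ψ (U.mkQ x) : Fin n → ℂ) ∈ E₂) ∧
      (∀ x ∈ E₂, (ψ (U.mkQ x) : Fin n → ℂ) ∈ E₁) ∧
      finrank ℂ (LinearMap.range ψ) =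
        min s ((n - k) - (p - s)) + min t ((n - k) - (q - t)) :=
  conormal_vector_rank_attained_general p q k n s t E₁ E₂ hcompl hE₁ hE₂ U hU hs ht
end

section
/- For every i with 0 ≤ 2i ≤ n, the topological closure in Mat_n(ℂ) of the set {M : Mᵀ = −M and rank M = 2i} of skew-symmetric matrices of rank exactly 2i equals the set {M : Mᵀ = −M and rank M ≤ 2i} of skew-symmetric matrices of rank at most 2i. (Thus the rank strata give a stratification of the space of skew-symmetric matrices by closed subsets.) -/
/-!
Having rank at most `k` is a closed condition, since linearly independent families form an open
set. Conversely, a skew-symmetric `M` of rank `r` is congruent to `A ⊕ 0` with `A` invertible and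
skew-symmetric, so `r` is even (`det A = det Aᵀ = (-1)ʳ det A`). Adding `ε` times a congruent copy
of `0 ⊕ J ⊕ 0`, with `J` the standard symplectic matrix of size `2m`, gives skew-symmetric matrices
of rank exactly `r + 2m` for every `ε ≠ 0`, and these tend to `M` as `ε → 0`.
-/

open Matrix

theorem Submodule.finrank_prod {K V W : Type*} [Field K] [AddCommGroup V] [Module K V]
    [AddCommGroup W] [Module K W] [FiniteDimensional K V] [FiniteDimensional K W]
    (p : Submodule K V) (q : Submodule K W) :
    Module.finrank K (p.prod q) = Module.finrank K p + Module.finrank K q := by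
  rw [← p.range_subtype, ← q.range_subtype, ← LinearMap.range_prodMap,
    LinearMap.finrank_range_of_inj (p.injective_subtype.prodMap q.injective_subtype),
    Module.finrank_prod, p.range_subtype, q.range_subtype]

namespace Matrix

variable {K : Type*} [Field K]

theorem rank_fromBlocks_zero_zero {α β : Type*} [Fintype α] [DecidableEq α] [Fintype β]
    [DecidableEq β] (A : Matrix α α K) (D : Matrix β β K) :
    (fromBlocks A 0 0 D).rank = A.rank + D.rank := by
  let b := (Pi.basisFun K α).prod (Pi.basisFun K β)
  have h : fromBlocks A 0 0 D = LinearMap.toMatrix b b ((toLin' A).prodMap (toLin' D)) := by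
    rw [LinearMap.toMatrix_prodMap, LinearMap.toMatrix_eq_toMatrix',
      LinearMap.toMatrix_eq_toMatrix', LinearMap.toMatrix'_toLin', LinearMap.toMatrix'_toLin']
  rw [h, rank_eq_finrank_range_toLin _ b b, toLin_toMatrix, LinearMap.range_prodMap,
    Submodule.finrank_prod]
  rfl

theorem isUnit_of_rank_eq_card {α : Type*} [Fintype α] [DecidableEq α] {A : Matrix α α K}
    (h : A.rank = Fintype.card α) : IsUnit A := by
  rw [← mulVec_surjective_iff_isUnit, ← coe_mulVecLin, ← LinearMap.range_eq_top]
  apply Submodule.eq_top_of_finrank_eq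
  rwa [Module.finrank_fintype_fun_eq_card]

theorem transpose_submatrix_eq_neg {R ι α : Type*} [Neg R] {X : Matrix ι ι R} (hX : Xᵀ = -X)
    (e : α → ι) : (X.submatrix e e)ᵀ = -X.submatrix e e := by
  rw [transpose_submatrix, hX]
  rfl

theorem eq_fromBlocks_zero_zero_of_transpose_eq_neg {R α β : Type*} [CommRing R] [Fintype α]
    [Fintype β] [DecidableEq α] {X B : Matrix (α ⊕ β) (α ⊕ β) R} (hX : Xᵀ = -X)
    (hXB : X = B * fromBlocks 1 0 0 0) : X = fromBlocks B.toBlocks₁₁ 0 0 0 := by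
  rw [← fromBlocks_toBlocks B, fromBlocks_multiply] at hXB
  simp only [Matrix.mul_one, Matrix.mul_zero, add_zero] at hXB
  have h21 : B.toBlocks₂₁ = 0 := by
    rw [hXB, fromBlocks_transpose, fromBlocks_neg, fromBlocks_inj] at hX
    simpa using hX.2.1
  rw [hXB, h21]

theorem exists_eq_transpose_mul_fromBlocks_mul_of_transpose_eq_neg {ι : Type*} [Fintype ι]
    [DecidableEq ι] {M : Matrix ι ι K} (hM : Mᵀ = -M) :
    ∃ (Q : Matrix ι ι K) (e : ι ≃ Fin M.rank ⊕ Fin (Fintype.card ι - M.rank))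
      (A : Matrix (Fin M.rank) (Fin M.rank) K),
      IsUnit Q.det ∧ Aᵀ = -A ∧ IsUnit A ∧ M = Qᵀ * (fromBlocks A 0 0 0).submatrix e e * Q := by
  obtain ⟨V, U, e, hV, hU, hVMU⟩ := exists_rank_normal_form M
  have hUdet := (isUnit_iff_isUnit_det U).mp hU
  set X := Uᵀ * M * U
  have hX : X = (Uᵀ * V⁻¹) * (V * M * U) := by
    simp [X, Matrix.mul_assoc, nonsing_inv_mul_cancel_left _ _ ((isUnit_iff_isUnit_det V).mp hV)]
  set B := (Uᵀ * V⁻¹).submatrix e.symm e.symm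
  have hXB : X.submatrix e.symm e.symm = B * fromBlocks 1 0 0 0 := by
    rw [hX, hVMU, ← submatrix_mul_equiv _ _ _ e.symm]
    simp [B]
  have hX_skew : (X.submatrix e.symm e.symm)ᵀ = -X.submatrix e.symm e.symm :=
    transpose_submatrix_eq_neg (by simp [X, transpose_mul, hM, Matrix.mul_assoc]) e.symm
  have hXblocks := eq_fromBlocks_zero_zero_of_transpose_eq_neg hX_skew hXB
  have hA_skew : B.toBlocks₁₁ᵀ = -B.toBlocks₁₁ := by
    rw [hXblocks, fromBlocks_transpose, fromBlocks_neg, fromBlocks_inj] at hX_skew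
    exact hX_skew.1
  have hA_rank : B.toBlocks₁₁.rank = M.rank := by
    have := rank_submatrix X e.symm e.symm
    rw [hXblocks, rank_fromBlocks_zero_zero, rank_zero, add_zero] at this
    rw [this, rank_mul_eq_left_of_isUnit_det _ _ hUdet,
      rank_mul_eq_right_of_isUnit_det _ _ (by rwa [det_transpose])]
  refine ⟨U⁻¹, e, B.toBlocks₁₁, isUnit_nonsing_inv_det U hUdet, hA_skew,
    isUnit_of_rank_eq_card (by rw [hA_rank, Fintype.card_fin]), ?_⟩
  rw [← hXblocks, submatrix_submatrix, Equiv.symm_comp_self, submatrix_id_id]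
  simp only [X, Matrix.mul_assoc]
  rw [mul_nonsing_inv U hUdet, Matrix.mul_one, ← Matrix.mul_assoc, ← transpose_mul,
    mul_nonsing_inv U hUdet, transpose_one, Matrix.one_mul]

theorem even_card_of_transpose_eq_neg (hK : ringChar K ≠ 2) {α : Type*} [Fintype α]
    [DecidableEq α] {A : Matrix α α K} (hA : Aᵀ = -A) (hdet : A.det ≠ 0) :
    Even (Fintype.card α) := by
  have h : A.det = (-1) ^ Fintype.card α * A.det := by
    rw [← det_neg, ← hA, det_transpose]
  refine (neg_one_pow_eq_one_iff_even (Ring.neg_one_ne_one_of_char_ne_two hK)).mp ?_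
  exact (mul_eq_right₀ hdet).mp h.symm

theorem even_rank_of_transpose_eq_neg (hK : ringChar K ≠ 2) {ι : Type*} [Fintype ι]
    [DecidableEq ι] {M : Matrix ι ι K} (hM : Mᵀ = -M) : Even M.rank := by
  obtain ⟨Q, e, A, -, hA_skew, hA, -⟩ :=
    exists_eq_transpose_mul_fromBlocks_mul_of_transpose_eq_neg hM
  simpa using even_card_of_transpose_eq_neg hK hA_skew ((isUnit_iff_isUnit_det A).mp hA).ne_zero

theorem exists_transpose_eq_neg_rank_eq {β : Type*} [Fintype β] {m : ℕ}
    (hm : 2 * m ≤ Fintype.card β) : ∃ G : Matrix β β K, Gᵀ = -G ∧ G.rank = 2 * m := by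
  let e : β ≃ (Fin m ⊕ Fin m) ⊕ Fin (Fintype.card β - 2 * m) :=
    Fintype.equivOfCardEq (by simp; omega)
  refine ⟨(fromBlocks (J (Fin m) K) 0 0 0).submatrix e e, ?_, ?_⟩
  · refine transpose_submatrix_eq_neg ?_ e
    rw [fromBlocks_transpose, J_transpose, fromBlocks_neg]
    simp
  · rw [rank_submatrix, rank_fromBlocks_zero_zero, rank_zero,
      rank_of_isUnit _ ((isUnit_iff_isUnit_det _).mpr (isUnit_det_J _ _))]
    simp [two_mul]

theorem exists_transpose_eq_neg_rank_add_smul_eq {ι : Type*} [Fintype ι] [DecidableEq ι]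
    {M : Matrix ι ι K} (hM : Mᵀ = -M) {m : ℕ} (hm : M.rank + 2 * m ≤ Fintype.card ι) :
    ∃ N : Matrix ι ι K, Nᵀ = -N ∧ ∀ ε : K, ε ≠ 0 → (M + ε • N).rank = M.rank + 2 * m := by
  obtain ⟨Q, e, A, hQ, -, hA, hMQ⟩ :=
    exists_eq_transpose_mul_fromBlocks_mul_of_transpose_eq_neg hM
  obtain ⟨G, hG, hG_rank⟩ :=
    exists_transpose_eq_neg_rank_eq (K := K) (β := Fin (Fintype.card ι - M.rank)) (m := m)
      (by rw [Fintype.card_fin]; omega)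
  have hrank (D) : (Qᵀ * (fromBlocks A 0 0 D).submatrix e e * Q).rank = M.rank + D.rank := by
    rw [rank_mul_eq_left_of_isUnit_det _ _ hQ,
      rank_mul_eq_right_of_isUnit_det _ _ (by rwa [det_transpose]), rank_submatrix,
      rank_fromBlocks_zero_zero, rank_of_isUnit A hA, Fintype.card_fin]
  refine ⟨Qᵀ * (fromBlocks 0 0 0 G).submatrix e e * Q, ?_, fun ε hε => ?_⟩
  · have hskew : (fromBlocks (0 : Matrix (Fin M.rank) (Fin M.rank) K) 0 0 G)ᵀ =
        -fromBlocks 0 0 0 G := by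
      rw [fromBlocks_transpose, hG, fromBlocks_neg]
      simp
    rw [transpose_mul, transpose_mul, transpose_transpose, transpose_submatrix_eq_neg hskew]
    simp [Matrix.mul_assoc]
  · have hsum : M + ε • (Qᵀ * (fromBlocks 0 0 0 G).submatrix e e * Q) =
        Qᵀ * (fromBlocks A 0 0 (ε • G)).submatrix e e * Q := by
      nth_rw 1 [hMQ]
      rw [← Matrix.smul_mul, ← Matrix.mul_smul, ← Matrix.add_mul, ← Matrix.mul_add,
        show fromBlocks A 0 0 (ε • G) = fromBlocks A 0 0 0 + ε • fromBlocks 0 0 0 G by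
          simp [fromBlocks_smul, fromBlocks_add]]
      rfl
    rw [hsum, hrank, rank_smul_of_mem_nonZeroDivisors _ (mem_nonZeroDivisors_of_ne_zero hε),
      hG_rank]

theorem isClosed_setOf_rank_le {𝕜 : Type*} [NontriviallyNormedField 𝕜] [CompleteSpace 𝕜]
    {m n : Type*} [Fintype m] [Fintype n] [DecidableEq n] (k : ℕ) :
    IsClosed {A : Matrix m n 𝕜 | A.rank ≤ k} := by
  let Φ : Matrix m n 𝕜 →ₗ[𝕜] (n → 𝕜) →L[𝕜] (m → 𝕜) :=
    LinearMap.toContinuousLinearMap.toLinearMap ∘ₗ toLin'.toLinearMap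
  have hΦ : {A : Matrix m n 𝕜 | A.rank ≤ k} =
      Φ ⁻¹' {f | ↑(k + 1) ≤ (f : (n → 𝕜) →ₗ[𝕜] (m → 𝕜)).rank}ᶜ := by
    ext A
    change A.rank ≤ k ↔ ¬ ((k + 1 : ℕ) : Cardinal) ≤ Module.rank 𝕜 (LinearMap.range (toLin' A))
    rw [← Module.finrank_eq_rank, Nat.cast_le, not_le, Nat.lt_succ_iff]
    rfl
  rw [hΦ]
  exact (isOpen_setOfPred_nat_le_rank (k + 1)).isClosed_compl.preimage
    Φ.continuous_of_finiteDimensional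

end Matrix

theorem mem_closure_of_forall_add_smul_mem {𝕜 E : Type*} [NontriviallyNormedField 𝕜]
    [AddCommGroup E] [TopologicalSpace E] [ContinuousAdd E] [Module 𝕜 E] [ContinuousSMul 𝕜 E]
    {s : Set E} {x v : E} (h : ∀ ε : 𝕜, ε ≠ 0 → x + ε • v ∈ s) : x ∈ closure s := by
  have hcont : Continuous fun ε : 𝕜 => x + ε • v := by fun_prop
  have hlim : Filter.Tendsto (fun ε : 𝕜 => x + ε • v) (nhdsWithin 0 {0}ᶜ) (nhds x) := by
    simpa using (hcont.tendsto 0).mono_left nhdsWithin_le_nhds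
  exact mem_closure_of_tendsto hlim (eventually_mem_nhdsWithin.mono h)

/-- For `0 ≤ 2i ≤ n`, the closure in `Mat_n(ℂ)` of the set of
skew-symmetric matrices of rank exactly `2i` is the set of skew-symmetric matrices
of rank at most `2i`. -/
theorem closure_skew_rank_stratum (n i : ℕ) (hi : 2 * i ≤ n) :
    closure {M : Matrix (Fin n) (Fin n) ℂ | Mᵀ = -M ∧ M.rank = 2 * i} =
      {M : Matrix (Fin n) (Fin n) ℂ | Mᵀ = -M ∧ M.rank ≤ 2 * i} := by
  refine Set.Subset.antisymm (closure_minimal (fun M hM => ⟨hM.1, hM.2.le⟩) ?_) ?_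
  · exact (isClosed_eq continuous_id.matrix_transpose continuous_id.neg).inter
      (isClosed_setOf_rank_le _)
  · rintro M ⟨hM, hM_rank⟩
    obtain ⟨j, hj⟩ := even_rank_of_transpose_eq_neg (by simp) hM
    obtain ⟨N, hN, hN_rank⟩ := exists_transpose_eq_neg_rank_add_smul_eq hM (m := i - j)
      (by simp only [Fintype.card_fin]; omega)
    refine mem_closure_of_forall_add_smul_mem (𝕜 := ℂ) (v := N) fun ε hε => ⟨?_, ?_⟩
    · rw [transpose_add, transpose_smul, hM, hN, smul_neg, neg_add]
    · rw [hN_rank ε hε]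
      omega
end

section
/- Let a, b be natural numbers and n = a + b. Let x be a symmetric n×n complex matrix, written in block form x = [[x₁₁, x₁₂],[x₂₁, x₂₂]] with x₁₁ of size a×a and x₂₂ of size b×b, and suppose the block x₂₂ is invertible. Then every symmetric n×n complex matrix C can be written as C = Y·x + x·Yᵀ + D for some n×n complex matrix Y and some symmetric matrix D whose bottom-right b×b block is zero. (This is the transversality of the section U ↦ B|_U to the rank stratification of symmetric matrices, in the case of a symmetric form B.) -/
/-!
Take `Y` supported on the bottom-right block, with that block equal to `Z`. Then the
bottom-right block of `Y x + x Yᵀ` is `Z x₂₂ + x₂₂ Zᵀ`, and for the symmetric invertible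
block `x₂₂` the choice `Z = ½ C₂₂ x₂₂⁻¹` makes this equal to `C₂₂`. Whatever remains,
`D = C - (Y x + x Yᵀ)`, is symmetric with vanishing bottom-right block.
-/

open Matrix

namespace Matrix

variable {l m R : Type*}

theorem toBlocks₂₂_add [Add R] (M N : Matrix (l ⊕ m) (l ⊕ m) R) :
    (M + N).toBlocks₂₂ = M.toBlocks₂₂ + N.toBlocks₂₂ :=
  rfl

theorem toBlocks₂₂_sub [Sub R] (M N : Matrix (l ⊕ m) (l ⊕ m) R) :
    (M - N).toBlocks₂₂ = M.toBlocks₂₂ - N.toBlocks₂₂ :=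
  rfl

theorem toBlocks₂₂_transpose (M : Matrix (l ⊕ m) (l ⊕ m) R) :
    Mᵀ.toBlocks₂₂ = M.toBlocks₂₂ᵀ :=
  rfl

theorem IsSymm.toBlocks₂₂ {M : Matrix (l ⊕ m) (l ⊕ m) R} (hM : M.IsSymm) :
    M.toBlocks₂₂.IsSymm :=
  congr_arg Matrix.toBlocks₂₂ hM

theorem toBlocks₂₂_fromBlocks_zero_mul [Fintype l] [Fintype m] [NonUnitalNonAssocSemiring R]
    (Z : Matrix m m R) (M : Matrix (l ⊕ m) (l ⊕ m) R) :
    (fromBlocks 0 0 0 Z * M).toBlocks₂₂ = Z * M.toBlocks₂₂ := by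
  conv_lhs => rw [← fromBlocks_toBlocks M, fromBlocks_multiply]
  simp

variable [Fintype m] [DecidableEq m] [CommRing R] [Invertible (2 : R)]

theorem exists_mul_add_mul_transpose_eq {A S : Matrix m m R} (hA : A.IsSymm) (hA₀ : IsUnit A)
    (hS : S.IsSymm) : ∃ Z : Matrix m m R, Z * A + A * Zᵀ = S := by
  refine ⟨(⅟2 : R) • (S * A⁻¹), ?_⟩
  have hZA : (⅟2 : R) • (S * A⁻¹) * A = (⅟2 : R) • S := by
    rw [smul_mul, Matrix.mul_assoc, nonsing_inv_mul _ ((isUnit_iff_isUnit_det A).mp hA₀),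
      Matrix.mul_one]
  have hAZ : A * ((⅟2 : R) • (S * A⁻¹))ᵀ = (⅟2 : R) • S := by
    rw [← hA.eq, ← transpose_mul, hA.eq, hZA, transpose_smul, hS.eq]
  rw [hZA, hAZ, ← add_smul, invOf_two_add_invOf_two, one_smul]

theorem exists_eq_mul_add_mul_transpose_add_of_toBlocks₂₂_eq_zero [Fintype l]
    {x C : Matrix (l ⊕ m) (l ⊕ m) R} (hx : x.IsSymm) (hx₂₂ : IsUnit x.toBlocks₂₂)
    (hC : C.IsSymm) :
    ∃ Y D : Matrix (l ⊕ m) (l ⊕ m) R,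
      D.IsSymm ∧ D.toBlocks₂₂ = 0 ∧ C = Y * x + x * Yᵀ + D := by
  obtain ⟨Z, hZ⟩ := exists_mul_add_mul_transpose_eq hx.toBlocks₂₂ hx₂₂ hC.toBlocks₂₂
  set Y : Matrix (l ⊕ m) (l ⊕ m) R := fromBlocks 0 0 0 Z
  have hYx : (Y * x).toBlocks₂₂ = Z * x.toBlocks₂₂ := toBlocks₂₂_fromBlocks_zero_mul Z x
  have hxY : (x * Yᵀ).toBlocks₂₂ = x.toBlocks₂₂ * Zᵀ := by
    rw [← hx.eq, ← transpose_mul, toBlocks₂₂_transpose, hYx, transpose_mul, hx.eq,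
      hx.toBlocks₂₂.eq]
  refine ⟨Y, C - (Y * x + x * Yᵀ), ?_, ?_, by abel⟩
  · refine hC.sub ?_
    simp only [IsSymm, transpose_add, transpose_mul, transpose_transpose, hx.eq, add_comm]
  · rw [toBlocks₂₂_sub, toBlocks₂₂_add, hYx, hxY, hZ, sub_self]

end Matrix

/-- Let `x` be a symmetric `(a+b)×(a+b)` complex matrix whose
bottom-right `b×b` block is invertible. Then every symmetric matrix `C` can be
written as `C = Y·x + x·Yᵀ + D` with `D` symmetric and having zero bottom-right
`b×b` block. (Indices are modelled by `Fin a ⊕ Fin b`, so the bottom-right block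
is `Matrix.toBlocks₂₂`.) -/
theorem transversality_symmetric (a b : ℕ)
    (x : Matrix (Fin a ⊕ Fin b) (Fin a ⊕ Fin b) ℂ)
    (hx : xᵀ = x) (hx22 : IsUnit (Matrix.toBlocks₂₂ x)) :
    ∀ C : Matrix (Fin a ⊕ Fin b) (Fin a ⊕ Fin b) ℂ, Cᵀ = C →
      ∃ Y D : Matrix (Fin a ⊕ Fin b) (Fin a ⊕ Fin b) ℂ,
        Dᵀ = D ∧ Matrix.toBlocks₂₂ D = 0 ∧ C = Y * x + x * Yᵀ + D :=
  fun _ hC => exists_eq_mul_add_mul_transpose_add_of_toBlocks₂₂_eq_zero hx hx22 hC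
end

section
/- Let B be a nondegenerate symmetric bilinear form on ℂⁿ with n = 2m even. Consider the set of m-dimensional totally isotropic subspaces U ⊆ ℂⁿ (i.e., B(u,v) = 0 for all u, v ∈ U), and the equivalence relation U ~ U' given by the existence of an isometry g of B with det g = 1 and g(U) = U'. Then this relation has exactly two equivalence classes. (Thus the O(n)-orbit Q(n/2) on Gr(n/2, n) is a union of two closed SO(n)-orbits.) -/
/-!
A totally isotropic `m`-plane `U` of a nondegenerate symmetric form `B` in dimension `2m` is
spanned by the first half of a hyperbolic basis, i.e. one with Gram matrix `JD = [[0, 1], [1, 0]]`: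
take a basis `u` of `U`, a family `w` with `B (w i) (u j) = δ i j`, and correct it to
`f j = w j - ½ ∑ₖ B (w j) (w k) • u k`. Matching hyperbolic bases shows that the isometries act
transitively on these planes. An isometry preserving the span of `u` has block matrix
`[[A, X], [0, C]]` with `Aᵀ * C = 1`, so it has determinant one. Hence the planes form exactly two
orbits under isometries of determinant one, exchanged by the isometry swapping `u i₀` and `f i₀`,
which has determinant `-1`. Over an algebraically closed field all nondegenerate quadratic forms
are equivalent, so `B` has a hyperbolic basis.
-/

open Module Matrix LieAlgebra.Orthogonal
open LinearMap (BilinForm)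

namespace LieAlgebra.Orthogonal

variable {ι R : Type*} [DecidableEq ι] [CommRing R]

lemma JD_apply (a b : ι ⊕ ι) : JD ι R a b = if a = b.swap then 1 else 0 := by
  rcases a with a | a <;> rcases b with b | b <;> simp [JD, one_apply]

lemma JD_apply_swap_swap (i : ι) (a b : ι ⊕ ι) :
    JD ι R (Equiv.swap (.inl i) (.inr i) a) (Equiv.swap (.inl i) (.inr i) b) = JD ι R a b := by
  simp only [JD_apply]
  congr 1
  grind [Sum.swap]

lemma JD_mul_JD [Fintype ι] : JD ι R * JD ι R = 1 := by
  simp [JD, fromBlocks_multiply]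

lemma det_JD_mul_self [Fintype ι] : (JD ι R).det * (JD ι R).det = 1 := by
  rw [← det_mul, JD_mul_JD, det_one]

lemma det_eq_one_of_transpose_mul_JD_mul_eq [Fintype ι] {G : Matrix (ι ⊕ ι) (ι ⊕ ι) R}
    (hG : Gᵀ * JD ι R * G = JD ι R) (h₂₁ : G.toBlocks₂₁ = 0) : G.det = 1 := by
  obtain ⟨A, X, C, rfl⟩ : ∃ A X C, G = fromBlocks A X 0 C :=
    ⟨_, _, _, by rw [← h₂₁, fromBlocks_toBlocks]⟩
  have h₁₂ : Aᵀ * C = 1 := by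
    simpa [JD, fromBlocks_transpose, fromBlocks_multiply] using congrArg toBlocks₁₂ hG
  rw [det_fromBlocks_zero₂₁]
  simpa [det_mul] using congrArg det h₁₂

end LieAlgebra.Orthogonal

namespace LinearMap.BilinForm

variable {K V : Type*} [Field K] [AddCommGroup V] [Module K V] {B : BilinForm K V}

def IsTotallyIsotropic (B : BilinForm K V) (U : Submodule K V) : Prop :=
  ∀ u ∈ U, ∀ v ∈ U, B u v = 0

def SOConjugate (B : BilinForm K V) (U U' : Submodule K V) : Prop :=
  ∃ g : V ≃ₗ[K] V, (∀ v w, B (g v) (g w) = B v w) ∧ LinearMap.det (g : V →ₗ[K] V) = 1 ∧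
    U.map (g : V →ₗ[K] V) = U'

lemma isTotallyIsotropic_span {s : Set V} (hs : ∀ x ∈ s, ∀ y ∈ s, B x y = 0) :
    B.IsTotallyIsotropic (Submodule.span K s) := fun _ hu _ hv =>
  Submodule.span_induction₂ (p := fun u v _ _ => B u v = 0) (fun x y hx hy => hs x hx y hy)
    (by simp) (by simp) (by simp_all) (by simp_all) (by simp_all) (by simp_all) hu hv

lemma IsTotallyIsotropic.map {U : Submodule K V} (hU : B.IsTotallyIsotropic U) {g : V →ₗ[K] V}
    (hg : ∀ x y, B (g x) (g y) = B x y) : B.IsTotallyIsotropic (U.map g) := by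
  rintro _ ⟨x, hx, rfl⟩ _ ⟨y, hy, rfl⟩
  rw [hg]
  exact hU x hx y hy

lemma apply_basis_equiv_apply_basis_equiv {κ : Type*} (b b' : Basis κ K V) (e : κ ≃ κ)
    (h : ∀ i j, B (b' (e i)) (b' (e j)) = B (b i) (b j)) (x y : V) :
    B (b.equiv b' e x) (b.equiv b' e y) = B x y := by
  have : B.compl₁₂ (b.equiv b' e : V →ₗ[K] V) (b.equiv b' e : V →ₗ[K] V) = B :=
    ext_basis b fun i j => by simpa using h i j
  exact LinearMap.congr_fun₂ this x y

lemma transpose_mul_toMatrix_mul_of_isometry {κ : Type*} [Fintype κ] [DecidableEq κ]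
    (b : Basis κ K V) {g : V →ₗ[K] V} (hg : ∀ x y, B (g x) (g y) = B x y) :
    (LinearMap.toMatrix b b g)ᵀ * toMatrix b B * LinearMap.toMatrix b b g = toMatrix b B := by
  rw [← toMatrix_comp]
  congr 1
  ext x y
  exact hg x y

lemma det_mul_self_of_isometry [FiniteDimensional K V] (hB : B.Nondegenerate) {g : V →ₗ[K] V}
    (hg : ∀ x y, B (g x) (g y) = B x y) : LinearMap.det g * LinearMap.det g = 1 := by
  let b := Module.finBasis K V
  have hdet := congrArg Matrix.det (transpose_mul_toMatrix_mul_of_isometry b hg)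
  rw [det_mul, det_mul, det_transpose, LinearMap.det_toMatrix] at hdet
  have hne : (toMatrix b B).det ≠ 0 := (nondegenerate_iff_det_ne_zero b).1 hB
  exact mul_right_cancel₀ hne (by linear_combination hdet)

lemma det_basis_equiv_self {κ : Type*} [Fintype κ] [DecidableEq κ] (b : Basis κ K V)
    (e : Equiv.Perm κ) : LinearMap.det (b.equiv b e : V →ₗ[K] V) = Equiv.Perm.sign e := by
  have h := b.det_comp (b.equiv b e : V →ₗ[K] V) b
  have hcomp : (b.equiv b e : V →ₗ[K] V) ∘ b = b ∘ e := by ext; simp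
  rw [hcomp, AlternatingMap.map_perm, b.det_self, mul_one] at h
  simpa [Units.smul_def] using h.symm

variable {ι : Type*}

lemma repr_inr_eq_zero_of_mem_span_range_comp_inl (b : Basis (ι ⊕ ι) K V) {x : V}
    (hx : x ∈ Submodule.span K (Set.range (b ∘ Sum.inl))) (i : ι) : b.repr x (Sum.inr i) = 0 := by
  rw [Set.range_comp, Basis.mem_span_image] at hx
  exact Finsupp.notMem_support_iff.1 fun h => by simpa using hx h

lemma finrank_span_range_comp_inl [Fintype ι] (b : Basis (ι ⊕ ι) K V) :
    finrank K (Submodule.span K (Set.range (b ∘ Sum.inl))) = Fintype.card ι :=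
  finrank_span_eq_card (b.linearIndependent.comp _ Sum.inl_injective)

variable [DecidableEq ι]

lemma linearIndependent_of_apply_eq_JD [Fintype ι] {c : ι ⊕ ι → V}
    (hc : ∀ a b, B (c a) (c b) = JD ι K a b) : LinearIndependent K c := by
  refine Fintype.linearIndependent_iff.2 fun g hg a => ?_
  have := congrArg (fun x => B x (c a.swap)) hg
  simpa [map_sum, hc, JD_apply, -Fintype.sum_sum_type] using this

lemma exists_apply_eq_ite_of_linearIndependent [FiniteDimensional K V] (hB : B.Nondegenerate)
    {u : ι → V} (hu : LinearIndependent K u) :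
    ∃ w : ι → V, ∀ i j, B (w i) (u j) = if i = j then 1 else 0 := by
  have (i : ι) : ∃ g : V →ₗ[K] K, ∀ j, g (u j) = if i = j then 1 else 0 := by
    obtain ⟨g, hg⟩ := LinearMap.exists_extend ((Basis.span hu).coord i)
    refine ⟨g, fun j => ?_⟩
    have := LinearMap.congr_fun hg (Basis.span hu j)
    rw [LinearMap.comp_apply, Basis.coord_apply, Basis.repr_self, Submodule.subtype_apply,
      Basis.span_apply] at this
    simp [this, Finsupp.single_apply, eq_comm]
  choose g hg using this
  exact ⟨fun i => (B.toDual hB).symm (g i), fun i j => by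
    rw [← toDual_def hB, LinearEquiv.apply_symm_apply, hg]⟩

lemma exists_apply_eq_JD_of_isotropic [Fintype ι] [Invertible (2 : K)] (hB : B.IsSymm)
    {u w : ι → V} (hu : ∀ i j, B (u i) (u j) = 0)
    (hw : ∀ i j, B (w i) (u j) = if i = j then 1 else 0) :
    ∃ f : ι → V, ∀ a b, B (Sum.elim u f a) (Sum.elim u f b) = JD ι K a b := by
  have hw' (i j : ι) : B (u i) (w j) = if j = i then 1 else 0 := by rw [hB.eq, hw]
  refine ⟨fun j => w j - (⅟2 : K) • ∑ k, B (w j) (w k) • u k, ?_⟩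
  rintro (i | i) (j | j)
  · simp [hu, JD_apply]
  · simp [map_sum, hu, hw', JD_apply, eq_comm]
  · simp [map_sum, hu, hw, JD_apply]
  · simp [map_sum, hu, hw, hw', JD_apply, hB.eq (w j) (w i)]
    linear_combination -B (w i) (w j) * mul_inv_cancel₀ (Invertible.ne_zero (2 : K))

theorem exists_basis_toMatrix_eq_JD_of_isotropic [FiniteDimensional K V] [Invertible (2 : K)]
    (hB : B.IsSymm) (hnd : B.Nondegenerate) {m : ℕ} (hV : finrank K V = 2 * m)
    {U : Submodule K V} (hUm : finrank K U = m) (hU : B.IsTotallyIsotropic U) :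
    ∃ b : Basis (Fin m ⊕ Fin m) K V, toMatrix b B = JD (Fin m) K ∧
      Submodule.span K (Set.range (b ∘ Sum.inl)) = U := by
  let bU := finBasisOfFinrankEq K U hUm
  let u : Fin m → V := fun i => bU i
  have hu : LinearIndependent K u := bU.linearIndependent.map' U.subtype U.ker_subtype
  obtain ⟨w, hw⟩ := exists_apply_eq_ite_of_linearIndependent hnd hu
  obtain ⟨f, hf⟩ := exists_apply_eq_JD_of_isotropic hB (fun i j => hU _ (bU i).2 _ (bU j).2) hw
  let b := basisOfLinearIndependentOfCardEqFinrank' _ (linearIndependent_of_apply_eq_JD hf)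
    (by simp [hV, two_mul])
  refine ⟨b, ?_, ?_⟩
  · ext x y
    simp [b, toMatrix_apply, hf]
  · have hrange : Set.range (b ∘ Sum.inl) = U.subtype '' Set.range bU := by
      rw [← Set.range_comp]
      simp [b, Function.comp_def]
    rw [hrange, Submodule.span_image, bU.span_eq, Submodule.map_subtype_top]

theorem det_eq_one_of_isometry_of_map_le [Fintype ι] {b : Basis (ι ⊕ ι) K V}
    (hb : toMatrix b B = JD ι K) {g : V →ₗ[K] V} (hg : ∀ x y, B (g x) (g y) = B x y)
    (hgU : (Submodule.span K (Set.range (b ∘ Sum.inl))).map g ≤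
      Submodule.span K (Set.range (b ∘ Sum.inl))) :
    LinearMap.det g = 1 := by
  rw [← LinearMap.det_toMatrix b]
  refine det_eq_one_of_transpose_mul_JD_mul_eq ?_ ?_
  · rw [← hb]
    exact transpose_mul_toMatrix_mul_of_isometry b hg
  · ext i j
    simpa [toBlocks₂₁, LinearMap.toMatrix_apply] using repr_inr_eq_zero_of_mem_span_range_comp_inl b
      (hgU (Submodule.mem_map_of_mem (Submodule.subset_span ⟨j, rfl⟩))) i

lemma isTotallyIsotropic_span_range_comp_inl [Fintype ι] {b : Basis (ι ⊕ ι) K V}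
    (hb : toMatrix b B = JD ι K) :
    B.IsTotallyIsotropic (Submodule.span K (Set.range (b ∘ Sum.inl))) := by
  refine isTotallyIsotropic_span ?_
  rintro _ ⟨i, rfl⟩ _ ⟨j, rfl⟩
  simp [← toMatrix_apply, hb, JD_apply]

lemma exists_isometry_det_eq_neg_one [Fintype ι] {b : Basis (ι ⊕ ι) K V}
    (hb : toMatrix b B = JD ι K) (i : ι) :
    ∃ σ : V ≃ₗ[K] V, (∀ x y, B (σ x) (σ y) = B x y) ∧ LinearMap.det (σ : V →ₗ[K] V) = -1 := by
  refine ⟨b.equiv b (Equiv.swap (.inl i) (.inr i)),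
    apply_basis_equiv_apply_basis_equiv b b _ fun j k => ?_, ?_⟩
  · simp only [← toMatrix_apply, hb, JD_apply_swap_swap]
  · simp [det_basis_equiv_self]

lemma not_SOConjugate_map_of_det_eq_neg_one [Fintype ι] [Invertible (2 : K)]
    {b : Basis (ι ⊕ ι) K V} (hb : toMatrix b B = JD ι K) {σ : V ≃ₗ[K] V}
    (hσ : ∀ x y, B (σ x) (σ y) = B x y) (hσdet : LinearMap.det (σ : V →ₗ[K] V) = -1) :
    ¬ B.SOConjugate (Submodule.span K (Set.range (b ∘ Sum.inl)))
      ((Submodule.span K (Set.range (b ∘ Sum.inl))).map (σ : V →ₗ[K] V)) := by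
  rintro ⟨g, hg, hgdet, hgU⟩
  have hdet := det_eq_one_of_isometry_of_map_le hb (g := ((g.trans σ.symm) : V →ₗ[K] V))
    (fun x y => by simpa [hg] using (hσ (σ.symm (g x)) (σ.symm (g y))).symm)
    (by rw [LinearEquiv.coe_trans, Submodule.map_comp, hgU, ← Submodule.map_comp]; simp)
  rw [LinearEquiv.coe_trans, LinearMap.det_comp, hgdet, mul_one, LinearEquiv.det_coe_symm,
    hσdet, inv_neg_one] at hdet
  exact Invertible.ne_zero (2 : K) (by linear_combination -hdet)

lemma exists_isometry_map_eq_span_range_comp_inl [FiniteDimensional K V] [Invertible (2 : K)]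
    (hB : B.IsSymm) (hnd : B.Nondegenerate) {m : ℕ} {b : Basis (Fin m ⊕ Fin m) K V}
    (hb : toMatrix b B = JD (Fin m) K) {U : Submodule K V} (hUm : finrank K U = m)
    (hU : B.IsTotallyIsotropic U) :
    ∃ h : V ≃ₗ[K] V, (∀ x y, B (h x) (h y) = B x y) ∧
      U.map (h : V →ₗ[K] V) = Submodule.span K (Set.range (b ∘ Sum.inl)) := by
  obtain ⟨c, hc, hcU⟩ := exists_basis_toMatrix_eq_JD_of_isotropic hB hnd
    (by simp [finrank_eq_card_basis b, two_mul]) hUm hU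
  refine ⟨c.equiv b (Equiv.refl _),
    apply_basis_equiv_apply_basis_equiv c b _ fun i j => by simp [← toMatrix_apply, hb, hc], ?_⟩
  rw [← hcU, Submodule.map_span, ← Set.range_comp]
  simp [Function.comp_def]

theorem two_SO_orbits_of_toMatrix_eq_JD [FiniteDimensional K V] [Invertible (2 : K)]
    (hB : B.IsSymm) (hnd : B.Nondegenerate) {m : ℕ} (hm : 0 < m)
    (b : Basis (Fin m ⊕ Fin m) K V) (hb : toMatrix b B = JD (Fin m) K) :
    ∃ U₁ U₂ : Submodule K V,
      (finrank K U₁ = m ∧ B.IsTotallyIsotropic U₁) ∧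
      (finrank K U₂ = m ∧ B.IsTotallyIsotropic U₂) ∧
      ¬ B.SOConjugate U₁ U₂ ∧
      ∀ U : Submodule K V, (finrank K U = m ∧ B.IsTotallyIsotropic U) →
        B.SOConjugate U U₁ ∨ B.SOConjugate U U₂ := by
  set U₁ := Submodule.span K (Set.range (b ∘ Sum.inl))
  have hU₁ : finrank K U₁ = m ∧ B.IsTotallyIsotropic U₁ :=
    ⟨by simp [U₁, finrank_span_range_comp_inl], isTotallyIsotropic_span_range_comp_inl hb⟩
  obtain ⟨σ, hσ, hσdet⟩ := exists_isometry_det_eq_neg_one hb ⟨0, hm⟩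
  refine ⟨U₁, U₁.map (σ : V →ₗ[K] V), hU₁, ⟨by rw [LinearEquiv.finrank_map_eq, hU₁.1],
    hU₁.2.map hσ⟩, not_SOConjugate_map_of_det_eq_neg_one hb hσ hσdet, ?_⟩
  rintro U ⟨hUm, hU⟩
  obtain ⟨h, hh, hhU⟩ := exists_isometry_map_eq_span_range_comp_inl hB hnd hb hUm hU
  rcases mul_self_eq_one_iff.1 (det_mul_self_of_isometry hnd hh) with hdet | hdet
  · exact .inl ⟨h, hh, hdet, hhU⟩
  · refine .inr ⟨h.trans σ, fun x y => by simp [hσ, hh], ?_, ?_⟩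
    · rw [LinearEquiv.coe_trans, LinearMap.det_comp, hdet, hσdet]
      norm_num
    · rw [LinearEquiv.coe_trans, Submodule.map_comp, hhU]

lemma apply_isometryEquiv_toQuadraticMap [Invertible (2 : K)] {V' : Type*} [AddCommGroup V']
    [Module K V'] {B' : BilinForm K V'} (hB : B.IsSymm) (hB' : B'.IsSymm)
    (θ : B.toQuadraticMap.IsometryEquiv B'.toQuadraticMap) (x y : V) :
    B' (θ x) (θ y) = B x y := by
  have hcomp : B'.toQuadraticMap.comp (θ : V →ₗ[K] V') = B.toQuadraticMap :=
    QuadraticMap.ext θ.map_app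
  have := LinearMap.congr_fun₂ (congrArg (QuadraticMap.associated (R := K)) hcomp) x y
  rw [QuadraticMap.associated_comp] at this
  rwa [QuadraticMap.associated_left_inverse K hB.eq, compl₁₂_apply, LinearEquiv.coe_coe,
    QuadraticMap.associated_left_inverse K hB'.eq] at this

theorem exists_basis_toMatrix_eq_JD [IsAlgClosed K] [Invertible (2 : K)] [FiniteDimensional K V]
    (hB : B.IsSymm) (hnd : B.Nondegenerate) {m : ℕ} (hV : finrank K V = 2 * m) :
    ∃ b : Basis (Fin m ⊕ Fin m) K V, toMatrix b B = JD (Fin m) K := by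
  let b₀ := (finBasisOfFinrankEq K V hV).reindex ((finCongr (two_mul m)).trans finSumFinEquiv.symm)
  let B₀ := Matrix.toBilin b₀ (JD (Fin m) K)
  have hB₀ : B₀.IsSymm := by simp [B₀, Matrix.IsSymm, JD, fromBlocks_transpose]
  have hnd₀ : B₀.Nondegenerate := (Matrix.nondegenerate_of_det_ne_zero
    (left_ne_zero_of_mul_eq_one det_JD_mul_self)).toBilin b₀
  obtain ⟨θ⟩ := QuadraticForm.equivalent_of_isAlgClosed B.toQuadraticMap B₀.toQuadraticMap
    (by rw [QuadraticMap.associated_left_inverse K hB.eq]; exact hnd.1)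
    (by rw [QuadraticMap.associated_left_inverse K hB₀.eq]; exact hnd₀.1)
  refine ⟨b₀.map θ.toLinearEquiv.symm, ?_⟩
  ext i j
  rw [toMatrix_apply, ← apply_isometryEquiv_toQuadraticMap hB hB₀ θ, ← toMatrix_toBilin b₀ (JD _ K),
    toMatrix_apply]
  simp [B₀]

end LinearMap.BilinForm

/-- Let `B` be a nondegenerate symmetric bilinear form on `ℂⁿ`, with
`n = 2m` even (and positive). On the set of `m`-dimensional totally isotropic
subspaces, the relation "`U ~ U'` iff there is an isometry `g` of `B` with
`det g = 1` and `g(U) = U'`" has exactly two equivalence classes: there are two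
inequivalent totally isotropic `m`-planes such that every totally isotropic
`m`-plane is equivalent to one of them. -/
theorem two_families_of_maximal_isotropics (m : ℕ) (hm : 0 < m)
    (B : LinearMap.BilinForm ℂ (Fin (2 * m) → ℂ))
    (hsymm : ∀ v w, B v w = B w v)
    (hnd : ∀ v, (∀ w, B v w = 0) → v = 0) :
    ∃ U₁ U₂ : Submodule ℂ (Fin (2 * m) → ℂ),
      (finrank ℂ U₁ = m ∧ ∀ u ∈ U₁, ∀ v ∈ U₁, B u v = 0) ∧
      (finrank ℂ U₂ = m ∧ ∀ u ∈ U₂, ∀ v ∈ U₂, B u v = 0) ∧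
      ¬ (∃ g : (Fin (2 * m) → ℂ) ≃ₗ[ℂ] (Fin (2 * m) → ℂ),
            (∀ v w, B (g v) (g w) = B v w) ∧
            LinearMap.det (g : (Fin (2 * m) → ℂ) →ₗ[ℂ] (Fin (2 * m) → ℂ)) = 1 ∧
            Submodule.map (g : (Fin (2 * m) → ℂ) →ₗ[ℂ] (Fin (2 * m) → ℂ)) U₁ = U₂) ∧
      ∀ U : Submodule ℂ (Fin (2 * m) → ℂ),
        (finrank ℂ U = m ∧ ∀ u ∈ U, ∀ v ∈ U, B u v = 0) →
        (∃ g : (Fin (2 * m) → ℂ) ≃ₗ[ℂ] (Fin (2 * m) → ℂ),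
            (∀ v w, B (g v) (g w) = B v w) ∧
            LinearMap.det (g : (Fin (2 * m) → ℂ) →ₗ[ℂ] (Fin (2 * m) → ℂ)) = 1 ∧
            Submodule.map (g : (Fin (2 * m) → ℂ) →ₗ[ℂ] (Fin (2 * m) → ℂ)) U = U₁) ∨
        (∃ g : (Fin (2 * m) → ℂ) ≃ₗ[ℂ] (Fin (2 * m) → ℂ),
            (∀ v w, B (g v) (g w) = B v w) ∧
            LinearMap.det (g : (Fin (2 * m) → ℂ) →ₗ[ℂ] (Fin (2 * m) → ℂ)) = 1 ∧
            Submodule.map (g : (Fin (2 * m) → ℂ) →ₗ[ℂ] (Fin (2 * m) → ℂ)) U = U₂) := by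
  have hB : B.IsSymm := ⟨hsymm⟩
  have hB' : B.Nondegenerate := hB.isRefl.nondegenerate_iff_separatingLeft.2 hnd
  obtain ⟨b, hb⟩ := LinearMap.BilinForm.exists_basis_toMatrix_eq_JD hB hB'
    (finrank_fin_fun ℂ)
  exact LinearMap.BilinForm.two_SO_orbits_of_toMatrix_eq_JD hB hB' hm b hb
end
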